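/- arXiv:math/9506224 — 7 statements merged into one kernel-verified Lean document; each statement's English description precedes it below -/
import Mathlib

section
/- Let f : S¹ → S¹ be an orientation preserving homeomorphism with no periodic point. Then for every x ∈ S¹ the nonwandering set Ω(f) equals the ω-limit set ω(x) and equals the α-limit set α(x). -/
/-- The circle, as `ℝ/ℤ`. -/
abbrev S1 : Type := AddCircle (1 : ℝ)

/-- A circle homeomorphism is orientation preserving if it has a continuous strictly
monotone increasing lift commuting with the deck translation `x ↦ x + 1`. -/
def OrientationPreserving (f : S1 ≃ₜ S1) : Prop :=
  ∃ F : ℝ → ℝ, StrictMono F ∧ Continuous F ∧ (∀ x : ℝ, F (x + 1) = F x + 1) ∧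
    ∀ x : ℝ, f ((x : ℝ) : S1) = ((F x : ℝ) : S1)

/-- The `k`-th iterate of a homeomorphism, for `k : ℤ`. -/
noncomputable def zIter (f : S1 ≃ₜ S1) (k : ℤ) : S1 → S1 :=
  if 0 ≤ k then (⇑f)^[k.toNat] else (⇑f.symm)^[(-k).toNat]

/-- `f` has no periodic point. -/
def NoPeriodicPoint (f : S1 ≃ₜ S1) : Prop :=
  ∀ (x : S1) (n : ℕ), 1 ≤ n → (⇑f)^[n] x ≠ x

/-- `x` is a nonwandering point of `f`: every neighborhood `U` of `x` meets `f^k(U)`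
for some nonzero integer `k`. -/
def IsNonwandering (f : S1 ≃ₜ S1) (x : S1) : Prop :=
  ∀ U ∈ nhds x, ∃ k : ℤ, k ≠ 0 ∧ (zIter f k '' U ∩ U).Nonempty

/-- The nonwandering set `Ω(f)`. -/
def nonwanderingSet (f : S1 ≃ₜ S1) : Set S1 := {x | IsNonwandering f x}

/-- The ω-limit set of the orbit of `x`. -/
def omegaSet (f : S1 ≃ₜ S1) (x : S1) : Set S1 :=
  ⋂ n : ℕ, closure {y | ∃ k ≥ n, (⇑f)^[k] x = y}

/-- The α-limit set of the orbit of `x`. -/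
def alphaSet (f : S1 ≃ₜ S1) (x : S1) : Set S1 :=
  ⋂ n : ℕ, closure {y | ∃ k ≥ n, (⇑f.symm)^[k] x = y}

/-!
A nonwandering point `z` comes back close to itself: there are lifts `a`, `b` of points near `z`
and `K ≥ 1` with `f^K a = b` mod 1. The lift `G` of `f^K` with `G a = b` has no fixed point, so
`G - id` has constant sign, and the orbit of every point under `G` is unbounded in that direction
(a bounded monotone orbit would converge to a fixed point). By monotonicity of `G` the orbit of any
lift of `x`, shifted by an integer, therefore lands between `a` and `b` at arbitrarily late times,
so `z ∈ ω(x)`. The inclusion `ω(x) ⊆ Ω(f)` holds for every map, and `α(x)` is the ω-limit set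
of `f⁻¹`, which satisfies the same hypotheses and has the same nonwandering set.
-/

open Set Function Filter Topology

theorem forall_lt_or_forall_gt_of_forall_ne {X α : Type*} [TopologicalSpace X]
    [PreconnectedSpace X] [LinearOrder α] [TopologicalSpace α] [OrderClosedTopology α] {f g : X → α}
    (hf : Continuous f) (hg : Continuous g) (hne : ∀ x, f x ≠ g x) :
    (∀ x, f x < g x) ∨ ∀ x, g x < f x := by
  have hclosed : {x | f x < g x} = {x | f x ≤ g x} := ext fun x => (hne x).le_iff_lt.symm
  have hclopen : IsClopen {x | f x < g x} := ⟨hclosed ▸ isClosed_le hf hg, isOpen_lt hf hg⟩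
  rcases isClopen_iff.1 hclopen with h | h
  · exact .inr fun x => (hne x).lt_or_gt.resolve_left (eq_empty_iff_forall_notMem.1 h x)
  · exact .inl fun x => eq_univ_iff_forall.1 h x

theorem Monotone.exists_iterate_mem_Icc_of_iterate_lt_of_le_iterate {α : Type*} [LinearOrder α]
    {G : α → α} (hG : Monotone G) {a t : α} {n m : ℕ} (hn : G^[n] t < a)
    (hm : a ≤ G^[n + m] t) : ∃ j > n, G^[j] t ∈ Icc a (G a) := by
  induction m generalizing n with
  | zero => exact absurd hm (not_le.2 hn)
  | succ m ih =>
    by_cases hcross : a ≤ G^[n + 1] t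
    · exact ⟨n + 1, n.lt_add_one, hcross, by rw [iterate_succ_apply']; exact hG hn.le⟩
    · obtain ⟨j, hj, hmem⟩ := ih (n := n + 1) (not_le.1 hcross) (by rwa [add_right_comm, add_assoc])
      exact ⟨j, by omega, hmem⟩

theorem Continuous.exists_le_iterate_of_forall_lt {α : Type*} [ConditionallyCompleteLinearOrder α]
    [TopologicalSpace α] [OrderTopology α] {G : α → α} (hG : Continuous G)
    (hlt : ∀ t, t < G t) (t c : α) : ∃ m, c ≤ G^[m] t := by
  by_contra! hbdd
  have hmono : Monotone fun m => G^[m] t :=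
    monotone_nat_of_le_succ fun m => by rw [iterate_succ_apply']; exact (hlt _).le
  have hlim := tendsto_atTop_ciSup hmono ⟨c, forall_mem_range.2 fun m => (hbdd m).le⟩
  have hsucc : Tendsto (fun m => G (G^[m] t)) atTop (𝓝 (⨆ m, G^[m] t)) := by
    simpa only [iterate_succ_apply'] using (tendsto_add_atTop_iff_nat 1).2 hlim
  exact (hlt _).ne (tendsto_nhds_unique hsucc ((hG.tendsto _).comp hlim))

theorem Monotone.exists_iterate_mem_Icc {α : Type*} [ConditionallyCompleteLinearOrder α]
    [TopologicalSpace α] [OrderTopology α] {G : α → α} (hmono : Monotone G) (hcont : Continuous G)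
    (hlt : ∀ t, t < G t) {a t : α} {n : ℕ} (hn : G^[n] t < a) :
    ∃ j > n, G^[j] t ∈ Icc a (G a) := by
  obtain ⟨m, hm⟩ := hcont.exists_le_iterate_of_forall_lt hlt (G^[n] t) a
  exact hmono.exists_iterate_mem_Icc_of_iterate_lt_of_le_iterate hn
    (by rwa [add_comm, iterate_add_apply])

theorem exists_iterate_add_int_mem_uIcc {G : ℝ → ℝ} (hmono : Monotone G) (hcont : Continuous G)
    (hper : ∀ p : ℤ, Function.Commute G (· + p)) (hfix : ∀ t, G t ≠ t) (a s : ℝ) (n : ℕ) :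
    ∃ j ≥ n, ∃ p : ℤ, G^[j] (s + p) ∈ uIcc a (G a) := by
  have hshift (j : ℕ) (p : ℤ) : G^[j] (s + p) = G^[j] s + p := (hper p).iterate_left j s
  rcases forall_lt_or_forall_gt_of_forall_ne continuous_id hcont fun t => (hfix t).symm with
    hlt | hgt
  · obtain ⟨p, hp⟩ := exists_int_lt (a - G^[n] s)
    obtain ⟨j, hj, hmem⟩ := hmono.exists_iterate_mem_Icc hcont hlt
      (show G^[n] (s + p) < a by rw [hshift]; linarith)
    exact ⟨j, hj.le, p, Icc_subset_uIcc hmem⟩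
  · obtain ⟨p, hp⟩ := exists_int_gt (a - G^[n] s)
    obtain ⟨j, hj, hmem⟩ := Monotone.exists_iterate_mem_Icc (α := ℝᵒᵈ) hmono.dual hcont hgt
      (show a < G^[n] (s + p) by rw [hshift]; linarith)
    exact ⟨j, hj.le, p, Icc_subset_uIcc' ⟨hmem.2, hmem.1⟩⟩

theorem zIter_natCast (f : S1 ≃ₜ S1) (k : ℕ) : zIter f k = f^[k] := by
  simp [zIter]

theorem zIter_symm (f : S1 ≃ₜ S1) (k : ℤ) : zIter f.symm k = zIter f (-k) := by
  rcases lt_trichotomy k 0 with hk | rfl | hk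
  · simp [zIter, hk.not_ge, hk.le]
  · simp [zIter]
  · simp [zIter, hk.le, hk]

theorem nonwanderingSet_symm (f : S1 ≃ₜ S1) : nonwanderingSet f.symm = nonwanderingSet f := by
  ext z
  refine forall₂_congr fun U _ => ⟨fun ⟨k, hk, h⟩ => ⟨-k, neg_ne_zero.2 hk, ?_⟩,
    fun ⟨k, hk, h⟩ => ⟨-k, neg_ne_zero.2 hk, ?_⟩⟩
  · rwa [← zIter_symm]
  · rwa [zIter_symm, neg_neg]

theorem alphaSet_eq_omegaSet_symm (f : S1 ≃ₜ S1) (x : S1) : alphaSet f x = omegaSet f.symm x :=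
  rfl

theorem omegaSet_subset_nonwanderingSet (f : S1 ≃ₜ S1) (x : S1) :
    omegaSet f x ⊆ nonwanderingSet f := by
  intro z hz U hU
  simp only [omegaSet, mem_iInter] at hz
  obtain ⟨_, hy₁, k₁, -, rfl⟩ := mem_closure_iff_nhds.1 (hz 0) U hU
  obtain ⟨_, hy₂, k₂, hk, rfl⟩ := mem_closure_iff_nhds.1 (hz (k₁ + 1)) U hU
  refine ⟨(k₂ - k₁ : ℕ), by omega, _, ⟨_, hy₁, ?_⟩, hy₂⟩
  rw [zIter_natCast, ← iterate_add_apply, Nat.sub_add_cancel (by omega)]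

theorem IsNonwandering.exists_iterate_mem {f : S1 ≃ₜ S1} {z : S1} (hz : IsNonwandering f z)
    {U : Set S1} (hU : U ∈ 𝓝 z) : ∃ K ≥ 1, ∃ u ∈ U, f^[K] u ∈ U := by
  obtain ⟨k, hk, _, ⟨u, hu, rfl⟩, hku⟩ := hz U hU
  rcases le_or_gt 0 k with hk₀ | hk₀
  · rw [zIter, if_pos hk₀] at hku
    exact ⟨k.toNat, by omega, u, hu, hku⟩
  · refine ⟨(-k).toNat, by omega, _, hku, ?_⟩
    rw [zIter, if_neg hk₀.not_ge]
    rwa [(LeftInverse.iterate (fun y => f.apply_symm_apply y) _) u]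

theorem NoPeriodicPoint.symm {f : S1 ≃ₜ S1} (hnp : NoPeriodicPoint f) :
    NoPeriodicPoint f.symm := by
  intro x n hn hx
  refine hnp x n hn ?_
  calc f^[n] x = f^[n] (f.symm^[n] x) := by rw [hx]
    _ = x := LeftInverse.iterate (fun y => f.apply_symm_apply y) n x

theorem OrientationPreserving.symm {f : S1 ≃ₜ S1} (hor : OrientationPreserving f) :
    OrientationPreserving f.symm := by
  obtain ⟨F, hFmono, hFcont, hF1, hFf⟩ := hor
  have hsurj : Surjective F :=
    (CircleDeg1Lift.continuous_iff_surjective (f := ⟨⟨F, hFmono.monotone⟩, hF1⟩)).1 hFcont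
  set e : ℝ ≃o ℝ := hFmono.orderIsoOfSurjective F hsurj
  refine ⟨e.symm, e.symm.strictMono, e.symm.continuous, fun t => ?_, fun t => ?_⟩
  · rw [e.symm_apply_eq]
    change t + 1 = F (e.symm t + 1)
    rw [hF1]
    exact congrArg (· + 1) (e.apply_symm_apply t).symm
  · rw [f.symm_apply_eq, hFf]
    exact congrArg _ (e.apply_symm_apply t).symm

theorem OrientationPreserving.exists_iterate_mem_image_uIcc {f : S1 ≃ₜ S1}
    (hor : OrientationPreserving f) (hnp : NoPeriodicPoint f) {K : ℕ} (hK : 1 ≤ K) {a b : ℝ}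
    (hab : f^[K] a = b) (x : S1) (n : ℕ) :
    ∃ m ≥ n, f^[m] x ∈ ((↑) : ℝ → S1) '' uIcc a b := by
  obtain ⟨F, hFmono, hFcont, hF1, hFf⟩ := hor
  have hFper (p : ℤ) : Function.Commute F (· + p) :=
    (CircleDeg1Lift.mk ⟨F, hFmono.monotone⟩ hF1).commute_add_int p
  have hFK : Semiconj ((↑) : ℝ → S1) F^[K] f^[K] :=
    Semiconj.iterate_right (fun t => (hFf t).symm) K
  obtain ⟨M, hM⟩ : ∃ M : ℤ, (M : ℝ) = b - F^[K] a := by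
    have h0 : ((b - F^[K] a : ℝ) : S1) = 0 := by rw [AddCircle.coe_sub, ← hab, hFK a, sub_self]
    obtain ⟨M, hM⟩ := (AddCircle.coe_eq_zero_iff (1 : ℝ)).1 h0
    exact ⟨M, by rw [← hM, zsmul_one]⟩
  set G : ℝ → ℝ := fun t => F^[K] t + M
  have hG : Semiconj ((↑) : ℝ → S1) G f^[K] := fun t => by
    rw [← hFK]
    exact QuotientAddGroup.mk_add_of_mem _ (AddSubgroup.intCast_mem_zmultiples_one M)
  have hGper (p : ℤ) : Function.Commute G (· + p) := fun t => by
    simp only [G, (hFper p).iterate_left K t, add_right_comm]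
  have hGfix (t : ℝ) : G t ≠ t := fun h => hnp t K hK (by rw [← hG, h])
  obtain ⟨s, rfl⟩ := QuotientAddGroup.mk_surjective x
  obtain ⟨j, hj, p, hmem⟩ := exists_iterate_add_int_mem_uIcc
    ((hFmono.monotone.iterate K).add_const _) ((hFcont.iterate K).add continuous_const)
    hGper hGfix a s n
  refine ⟨K * j, hj.trans (Nat.le_mul_of_pos_left j hK), G^[j] (s + p), ?_, ?_⟩
  · simpa [G, hM] using hmem
  · have hshift : G^[j] (s + p) = G^[j] s + p := (hGper p).iterate_left j s
    rw [iterate_mul, ← hG.iterate_right, hshift]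
    exact QuotientAddGroup.mk_add_of_mem _ (AddSubgroup.intCast_mem_zmultiples_one p)

theorem nonwanderingSet_subset_omegaSet {f : S1 ≃ₜ S1} (hor : OrientationPreserving f)
    (hnp : NoPeriodicPoint f) (x : S1) : nonwanderingSet f ⊆ omegaSet f x := by
  intro z hz
  simp only [omegaSet, mem_iInter]
  refine fun n => mem_closure_iff_nhds.2 fun V hV => ?_
  obtain ⟨ζ, rfl⟩ := QuotientAddGroup.mk_surjective z
  obtain ⟨l, r, hζ, hlr⟩ := mem_nhds_iff_exists_Ioo_subset.1
    ((AddCircle.continuous_mk' 1).continuousAt.preimage_mem_nhds hV)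
  have hU : ((↑) : ℝ → S1) '' Ioo l r ∈ 𝓝 (ζ : S1) :=
    (QuotientAddGroup.isOpenMap_coe _ isOpen_Ioo).mem_nhds (mem_image_of_mem _ hζ)
  obtain ⟨K, hK, _, ⟨a, ha, rfl⟩, b, hb, hab⟩ := IsNonwandering.exists_iterate_mem hz hU
  obtain ⟨m, hm, hmem⟩ := hor.exists_iterate_mem_image_uIcc hnp hK hab.symm x n
  exact ⟨f^[m] x, image_subset_iff.2 ((ordConnected_Ioo.uIcc_subset ha hb).trans hlr) hmem,
    m, hm, rfl⟩

theorem nonwanderingSet_eq_omegaSet {f : S1 ≃ₜ S1} (hor : OrientationPreserving f)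
    (hnp : NoPeriodicPoint f) (x : S1) : nonwanderingSet f = omegaSet f x :=
  (nonwanderingSet_subset_omegaSet hor hnp x).antisymm (omegaSet_subset_nonwanderingSet f x)

/-- for an orientation preserving circle homeomorphism with no periodic
point, the nonwandering set equals every ω-limit set and every α-limit set. -/
theorem nonwanderingSet_eq_omegaSet_eq_alphaSet (f : S1 ≃ₜ S1)
    (hor : OrientationPreserving f) (hnp : NoPeriodicPoint f) (x : S1) :
    nonwanderingSet f = omegaSet f x ∧ nonwanderingSet f = alphaSet f x := by
  refine ⟨nonwanderingSet_eq_omegaSet hor hnp x, ?_⟩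
  rw [alphaSet_eq_omegaSet_symm, ← nonwanderingSet_eq_omegaSet hor.symm hnp.symm x,
    nonwanderingSet_symm]
end

section
/- Let f : S¹ → S¹ be an orientation preserving homeomorphism with no periodic point. Then the nonwandering set Ω(f) is a minimal set for f: it is nonempty, closed, invariant under f and f⁻¹, and contains no nonempty proper closed invariant subset. -/
-- auxiliary lemmas

lemma S1.coe_add_int (x : ℝ) (m : ℤ) : ((x + m : ℝ) : S1) = (x : S1) := by
  have h0 : ((m : ℝ) : S1) = 0 := by
    rw [AddCircle.coe_eq_zero_iff]
    exact ⟨m, by simp⟩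
  rw [QuotientAddGroup.mk_add, h0, add_zero]

lemma S1.coe_eq_coe {a b : ℝ} (h : (a : S1) = (b : S1)) : ∃ m : ℤ, a = b + m := by
  rw [QuotientAddGroup.eq] at h
  obtain ⟨k, hk⟩ := AddSubgroup.mem_zmultiples_iff.mp h
  rw [zsmul_eq_mul, mul_one] at hk
  exact ⟨-k, by push_cast; linarith⟩

lemma sign_const {g : ℝ → ℝ} (hc : Continuous g) (hne : ∀ x, g x ≠ 0) :
    (∀ x, 0 < g x) ∨ (∀ x, g x < 0) := by
  rcases (hne 0).lt_or_gt with h | h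
  · right
    intro x
    rcases (hne x).lt_or_gt with h' | h'
    · exact h'
    · exfalso
      obtain ⟨c, -, hc0⟩ := intermediate_value_uIcc (a := 0) (b := x) hc.continuousOn
        (Set.mem_uIcc.mpr (Or.inl ⟨h.le, h'.le⟩))
      exact hne c hc0
  · left
    intro x
    rcases (hne x).lt_or_gt with h' | h'
    · exfalso
      obtain ⟨c, -, hc0⟩ := intermediate_value_uIcc (a := 0) (b := x) hc.continuousOn
        (Set.mem_uIcc.mpr (Or.inr ⟨h'.le, h.le⟩))
      exact hne c hc0
    · exact h'

lemma escape {G : ℝ → ℝ} (hc : Continuous G) (hgt : ∀ x, x < G x) (u₀ y₁ : ℝ) :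
    ∃ J : ℕ, y₁ < G^[J] u₀ := by
  by_contra h
  push_neg at h
  set s : ℕ → ℝ := fun j => G^[j] u₀ with hs
  have hmono : StrictMono s := strictMono_nat_of_lt_succ fun j => by
    rw [hs]; simp only [Function.iterate_succ_apply']; exact hgt _
  have hbdd : BddAbove (Set.range s) := ⟨y₁, by rintro _ ⟨j, rfl⟩; exact h j⟩
  have hlim : Filter.Tendsto s Filter.atTop (nhds (⨆ j, s j)) :=
    tendsto_atTop_ciSup hmono.monotone hbdd
  set L := ⨆ j, s j
  have h1 : Filter.Tendsto (fun j => s (j + 1)) Filter.atTop (nhds L) :=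
    hlim.comp (Filter.tendsto_add_atTop_nat 1)
  have h2 : Filter.Tendsto (fun j => G (s j)) Filter.atTop (nhds (G L)) :=
    (hc.continuousAt.tendsto).comp hlim
  have hGL : G L = L := by
    have he : (fun j => s (j + 1)) = fun j => G (s j) := by
      funext j; rw [hs]; simp [Function.iterate_succ_apply']
    rw [he] at h1
    exact tendsto_nhds_unique h2 h1
  exact absurd hGL (ne_of_gt (hgt L))

lemma find_interval {s : ℕ → ℝ} {y₁ : ℝ} (h0 : s 0 ≤ y₁) (hJ : ∃ J, y₁ < s J) :
    ∃ j, s j ≤ y₁ ∧ y₁ ≤ s (j + 1) := by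
  classical
  have hspec := Nat.find_spec hJ
  have hpos : Nat.find hJ ≠ 0 := by
    intro h
    rw [h] at hspec
    exact absurd h0 (not_le.mpr hspec)
  refine ⟨Nat.find hJ - 1, ?_, ?_⟩
  · have := Nat.find_min hJ (m := Nat.find hJ - 1) (by omega)
    exact not_lt.mp this
  · have heq : Nat.find hJ - 1 + 1 = Nat.find hJ := by omega
    rw [heq]
    exact hspec.le

lemma iterate_neg_conj (G : ℝ → ℝ) (j : ℕ) (x : ℝ) :
    (fun t => -(G (-t)))^[j] x = -(G^[j] (-x)) := by
  induction j generalizing x with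
  | zero => simp
  | succ j ih => rw [Function.iterate_succ_apply, Function.iterate_succ_apply, ih]; simp

section Main

variable (f : S1 ≃ₜ S1)

lemma iter_symm_iter (n : ℕ) (x : S1) : (⇑f.symm)^[n] ((⇑f)^[n] x) = x :=
  (Function.LeftInverse.iterate f.symm_apply_apply n) x

lemma iter_iter_symm (n : ℕ) (x : S1) : (⇑f)^[n] ((⇑f.symm)^[n] x) = x :=
  (Function.LeftInverse.iterate f.apply_symm_apply n) x

lemma lift_iterate {F : ℝ → ℝ} (h : ∀ x : ℝ, f ((x : ℝ) : S1) = ((F x : ℝ) : S1))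
    (n : ℕ) : ∀ x : ℝ, (⇑f)^[n] ((x : ℝ) : S1) = ((F^[n] x : ℝ) : S1) := by
  induction n with
  | zero => intro x; simp
  | succ m ih =>
      intro x
      rw [Function.iterate_succ_apply, Function.iterate_succ_apply, h x, ih (F x)]

lemma nonwandering_forward {z : S1} (hz : IsNonwandering f z) {V : Set S1}
    (hV : V ∈ nhds z) : ∃ n : ℕ, 1 ≤ n ∧ ∃ u ∈ V, (⇑f)^[n] u ∈ V := by
  obtain ⟨k, hk, p, ⟨q, hqV, rfl⟩, hpV⟩ := hz V hV
  rcases le_or_gt 0 k with hk0 | hk0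
  · refine ⟨k.toNat, by omega, q, hqV, ?_⟩
    rwa [zIter, if_pos hk0] at hpV
  · rw [zIter, if_neg (not_le.mpr hk0)] at hpV
    refine ⟨(-k).toNat, by omega, _, hpV, ?_⟩
    rwa [iter_iter_symm]

/-- Key lemma: every nonwandering point is in the closure of every backward orbit. -/
lemma key (hor : OrientationPreserving f) (hnp : NoPeriodicPoint f)
    {z : S1} (y : S1) (hz : IsNonwandering f z) {U : Set S1} (hU : U ∈ nhds z) :
    ∃ j : ℕ, (⇑f.symm)^[j] y ∈ U := by
  obtain ⟨F, hFmono, hFc, hFper, hFlift⟩ := hor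
  obtain ⟨z₀, rfl⟩ : ∃ z₀ : ℝ, ((z₀ : ℝ) : S1) = z := Quotient.exists_rep z
  have hcont : Continuous ((↑) : ℝ → S1) := continuous_quotient_mk'
  have hopen : IsOpenMap ((↑) : ℝ → S1) := QuotientAddGroup.isOpenMap_coe
  have hpre : ((↑) : ℝ → S1) ⁻¹' U ∈ nhds z₀ := hcont.continuousAt.preimage_mem_nhds hU
  obtain ⟨ε, hε, hball⟩ := Metric.mem_nhds_iff.mp hpre
  rw [Real.ball_eq_Ioo] at hball
  set I : Set ℝ := Set.Ioo (z₀ - ε) (z₀ + ε) with hIdef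
  set V : Set S1 := ((↑) : ℝ → S1) '' I with hVdef
  have hVU : V ⊆ U := Set.image_subset_iff.mpr hball
  have hVnhds : V ∈ nhds ((z₀ : ℝ) : S1) :=
    (hopen I isOpen_Ioo).mem_nhds ⟨z₀, ⟨by linarith, by linarith⟩, rfl⟩
  obtain ⟨n, hn1, u, huV, hfuV⟩ := nonwandering_forward f hz hVnhds
  obtain ⟨u₀, hu₀I, rfl⟩ := huV
  -- the lift of f^[n], normalized so that it carries u₀ into I
  rw [lift_iterate f hFlift n u₀] at hfuV
  obtain ⟨v₀, hv₀I, hv₀⟩ := hfuV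
  obtain ⟨m, hm⟩ := S1.coe_eq_coe hv₀
  set G : ℝ → ℝ := fun x => F^[n] x + m with hGdef
  have hGc : Continuous G := (hFc.iterate n).add continuous_const
  have hGlift : ∀ x : ℝ, (⇑f)^[n] ((x : ℝ) : S1) = ((G x : ℝ) : S1) := by
    intro x
    rw [lift_iterate f hFlift n x, hGdef]
    exact (S1.coe_add_int (F^[n] x) m).symm
  have hGu : G u₀ = v₀ := by rw [hGdef]; simpa using hm.symm
  -- G has no fixed point hence constant sign of G - id
  have hne : ∀ x : ℝ, G x - x ≠ 0 := by
    intro x hx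
    have hfix : G x = x := by linarith [sub_eq_zero.mp hx]
    exact hnp ((x : ℝ) : S1) n hn1 (by rw [hGlift x, hfix])
  have hlift_iter : ∀ (j : ℕ) (x : ℝ),
      (⇑f)^[n * j] ((x : ℝ) : S1) = ((G^[j] x : ℝ) : S1) := by
    intro j
    induction j with
    | zero => intro x; simp
    | succ i ih =>
        intro x
        have : n * (i + 1) = n + n * i := by ring
        rw [this, Function.iterate_add_apply, ih x, hGlift (G^[i] x)]
        simp [Function.iterate_succ_apply']
  -- y lifted
  obtain ⟨y₀, rfl⟩ : ∃ y₀ : ℝ, ((y₀ : ℝ) : S1) = y := Quotient.exists_rep y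
  -- main: find j and y₁ ≡ y with y₁ in the j-th interval
  have main : ∃ (y₁ : ℝ) (j : ℕ), ((y₁ : ℝ) : S1) = ((y₀ : ℝ) : S1) ∧
      y₁ ∈ Set.uIcc (G^[j] u₀) (G^[j] (G u₀)) := by
    rcases sign_const (g := fun x => G x - x) (hGc.sub continuous_id) hne with hpos | hneg
    · -- G > id
      have hgt : ∀ x, x < G x := fun x => by linarith [hpos x]
      set y₁ : ℝ := y₀ + ⌈u₀ - y₀⌉ with hy₁def
      have hy₁ : u₀ ≤ y₁ := by
        have := Int.le_ceil (u₀ - y₀)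
        rw [hy₁def]; linarith
      obtain ⟨j, hj1, hj2⟩ := find_interval (s := fun j => G^[j] u₀)
        (by simpa using hy₁) (escape hGc hgt u₀ y₁)
      refine ⟨y₁, j, by rw [hy₁def]; exact S1.coe_add_int y₀ _, ?_⟩
      rw [← Function.iterate_succ_apply]
      exact Set.mem_uIcc.mpr (Or.inl ⟨hj1, hj2⟩)
    · -- G < id : conjugate by negation
      have hgt : ∀ x, x < -(G (-x)) := fun x => by linarith [hneg (-x)]
      set y₁ : ℝ := y₀ + (-⌈y₀ - u₀⌉) with hy₁def
      have hy₁ : y₁ ≤ u₀ := by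
        have := Int.le_ceil (y₀ - u₀)
        rw [hy₁def]; linarith
      set G' : ℝ → ℝ := fun t => -(G (-t)) with hG'def
      have hG'c : Continuous G' := (hGc.comp continuous_neg).neg
      obtain ⟨j, hj1, hj2⟩ := find_interval (s := fun j => G'^[j] (-u₀))
        (y₁ := -y₁) (by simpa using neg_le_neg hy₁) (escape hG'c hgt (-u₀) (-y₁))
      rw [hG'def, iterate_neg_conj, neg_neg] at hj1 hj2
      refine ⟨y₁, j, by rw [hy₁def]; exact_mod_cast S1.coe_add_int y₀ (-⌈y₀ - u₀⌉), ?_⟩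
      rw [← Function.iterate_succ_apply]
      exact Set.mem_uIcc.mpr (Or.inr ⟨by linarith, by linarith⟩)
  obtain ⟨y₁, j, hy₁eq, hy₁mem⟩ := main
  -- intermediate value: find w in [u₀, v₀] with G^[j] w = y₁
  obtain ⟨w, hwmem, hw⟩ := intermediate_value_uIcc (a := u₀) (b := G u₀)
    ((hGc.iterate j).continuousOn) hy₁mem
  have hwI : w ∈ I := by
    have hsub : Set.uIcc u₀ (G u₀) ⊆ I := by
      apply Set.OrdConnected.uIcc_subset Set.ordConnected_Ioo hu₀I
      rw [hGu]; exact hv₀I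
    exact hsub hwmem
  refine ⟨n * j, ?_⟩
  have : (⇑f)^[n * j] ((w : ℝ) : S1) = ((y₀ : ℝ) : S1) := by
    rw [hlift_iter j w, hw, hy₁eq]
  have hww : (⇑f.symm)^[n * j] ((y₀ : ℝ) : S1) = ((w : ℝ) : S1) := by
    rw [← this, iter_symm_iter]
  rw [hww]
  exact hVU ⟨w, hwI, rfl⟩


lemma nonwandering_nonempty : (nonwanderingSet f).Nonempty := by
  set g : ℕ → S1 := fun n => (⇑f)^[n] 0 with hg
  haveI : Filter.NeBot (Filter.map g Filter.atTop) := Filter.map_neBot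
  obtain ⟨z, hz⟩ := exists_clusterPt_of_compactSpace (Filter.map g Filter.atTop)
  refine ⟨z, ?_⟩
  intro U hU
  have hmcp : MapClusterPt z Filter.atTop g := hz
  have hfreq : ∃ᶠ n in Filter.atTop, g n ∈ U := (mapClusterPt_iff_frequently.mp hmcp) U hU
  obtain ⟨a, -, hga⟩ := Filter.frequently_atTop.mp hfreq 0
  obtain ⟨b, hab, hgb⟩ := Filter.frequently_atTop.mp hfreq (a + 1)
  refine ⟨(b : ℤ) - a, by omega, g b, ?_, hgb⟩
  have h0 : (0:ℤ) ≤ (b : ℤ) - a := by omega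
  have htn : ((b : ℤ) - a).toNat = b - a := by omega
  refine ⟨g a, hga, ?_⟩
  rw [zIter, if_pos h0, htn, hg]
  simp only []
  rw [← Function.iterate_add_apply]
  congr 1
  omega

lemma zIter_comm_f (k : ℤ) (x : S1) : f (zIter f k x) = zIter f k (f x) := by
  have hcomm : Function.Commute ⇑f ⇑f.symm := fun t => by simp
  rw [zIter]
  split
  · rw [← Function.iterate_succ_apply' (⇑f), Function.iterate_succ_apply (⇑f)]
  · exact (hcomm.iterate_right _) x

lemma zIter_comm_fsymm (k : ℤ) (x : S1) : f.symm (zIter f k x) = zIter f k (f.symm x) := by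
  have hcomm : Function.Commute ⇑f.symm ⇑f := fun t => by simp
  rw [zIter]
  split
  · exact (hcomm.iterate_right _) x
  · rw [← Function.iterate_succ_apply' (⇑f.symm), Function.iterate_succ_apply (⇑f.symm)]

lemma nonwandering_image_f {x : S1} (hx : IsNonwandering f x) : IsNonwandering f (f x) := by
  intro U hU
  have h1 : ⇑f ⁻¹' U ∈ nhds x := f.continuous.continuousAt.preimage_mem_nhds hU
  obtain ⟨k, hk, p, ⟨q, hq, rfl⟩, hp⟩ := hx _ h1
  exact ⟨k, hk, f (zIter f k q), ⟨f q, hq, (zIter_comm_f f k q).symm⟩, hp⟩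

lemma nonwandering_image_fsymm {x : S1} (hx : IsNonwandering f x) :
    IsNonwandering f (f.symm x) := by
  intro U hU
  have h1 : ⇑f.symm ⁻¹' U ∈ nhds x := f.symm.continuous.continuousAt.preimage_mem_nhds hU
  obtain ⟨k, hk, p, ⟨q, hq, rfl⟩, hp⟩ := hx _ h1
  exact ⟨k, hk, f.symm (zIter f k q), ⟨f.symm q, hq, (zIter_comm_fsymm f k q).symm⟩, hp⟩

lemma nonwandering_closed : IsClosed (nonwanderingSet f) := by
  rw [← isOpen_compl_iff, isOpen_iff_mem_nhds]
  intro x hx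
  rw [Set.mem_compl_iff, nonwanderingSet, Set.mem_setOf_eq, IsNonwandering] at hx
  push_neg at hx
  obtain ⟨U₀, hU₀, hU₀none⟩ := hx
  refine Filter.mem_of_superset (interior_mem_nhds.mpr hU₀) ?_
  intro y hy hyΩ
  obtain ⟨k, hk, hne⟩ := hyΩ U₀ (mem_interior_iff_mem_nhds.mp hy)
  rw [hU₀none k hk] at hne
  exact Set.not_nonempty_empty hne

end Main

/-- for an orientation preserving circle homeomorphism with no periodic
point, the nonwandering set is a minimal set: nonempty, closed, invariant under `f`
and `f⁻¹`, and containing no nonempty proper closed invariant subset. -/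
theorem nonwanderingSet_minimal (f : S1 ≃ₜ S1)
    (hor : OrientationPreserving f) (hnp : NoPeriodicPoint f) :
    (nonwanderingSet f).Nonempty ∧ IsClosed (nonwanderingSet f) ∧
      f '' nonwanderingSet f ⊆ nonwanderingSet f ∧
      f.symm '' nonwanderingSet f ⊆ nonwanderingSet f ∧
      ∀ A : Set S1, A ⊆ nonwanderingSet f → A.Nonempty → IsClosed A →
        f '' A ⊆ A → f.symm '' A ⊆ A → A = nonwanderingSet f := by
  refine ⟨nonwandering_nonempty f, nonwandering_closed f, ?_, ?_, ?_⟩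
  · rintro p ⟨x, hx, rfl⟩
    exact nonwandering_image_f f hx
  · rintro p ⟨x, hx, rfl⟩
    exact nonwandering_image_fsymm f hx
  · rintro A hAΩ ⟨y, hyA⟩ hAclosed hfA hfsA
    have horb : ∀ j : ℕ, (⇑f.symm)^[j] y ∈ A := by
      intro j
      induction j with
      | zero => simpa using hyA
      | succ j ih =>
          rw [Function.iterate_succ_apply']
          exact hfsA ⟨_, ih, rfl⟩
    refine Set.Subset.antisymm hAΩ ?_
    intro z hz
    rw [← hAclosed.closure_eq]
    rw [mem_closure_iff_nhds]
    intro U hU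
    obtain ⟨j, hj⟩ := key f hor hnp y hz hU
    exact ⟨_, hj, horb j⟩
end

section
/- (Contraction Principle) Let f : S¹ → S¹ be a circle homeomorphism with no periodic orbits and let I be a nondegenerate subinterval of S¹. If inf_{n ≥ 0} |f^n(I)| = 0 (where |·| denotes arc length), then I is a wandering interval of f, i.e., the iterates f^k(I), k ∈ ℤ, are pairwise disjoint. -/
/-- `I` is a nondegenerate (open) subinterval of the circle, i.e. the projection of a
nondegenerate bounded open interval of `ℝ` of length less than `1`. -/
def IsNondegInterval (I : Set S1) : Prop :=
  ∃ u v : ℝ, u < v ∧ v < u + 1 ∧ I = (fun t : ℝ => ((t : ℝ) : S1)) '' Set.Ioo u v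

open MeasureTheory Set
open scoped ENNReal

lemma coe_eq_coe_iff {r s : ℝ} : ((r : S1) = (s : S1)) ↔ ∃ k : ℤ, r = s + k := by
  constructor
  · intro h
    have h2 := QuotientAddGroup.eq_iff_sub_mem.mp h.symm
    rw [AddSubgroup.mem_zmultiples_iff] at h2
    obtain ⟨k, hk⟩ := h2
    refine ⟨-k, ?_⟩
    rw [zsmul_eq_mul, mul_one] at hk
    push_cast
    linarith
  · rintro ⟨k, hk⟩
    subst hk
    rw [AddCircle.coe_add]
    have : ((k : ℝ) : S1) = 0 := by
      rw [AddCircle.coe_eq_zero_iff]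
      exact ⟨k, by rw [zsmul_eq_mul, mul_one]⟩
    rw [this, add_zero]

lemma coe_int_eq_zero (k : ℤ) : (((k : ℝ) : ℝ) : S1) = 0 := by
  rw [AddCircle.coe_eq_zero_iff]; exact ⟨k, by rw [zsmul_eq_mul, mul_one]⟩

lemma coe_add_int (w : ℝ) (k : ℤ) : (((w + (k:ℝ)) : ℝ) : S1) = ((w : ℝ) : S1) := by
  rw [AddCircle.coe_add, coe_int_eq_zero, add_zero]

lemma volume_coe_Ioo {a b : ℝ} (hb : b ≤ a + 1) :
    volume (((↑) : ℝ → S1) '' Ioo a b) = ENNReal.ofReal (b - a) := by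
  have hopen : IsOpen (((↑) : ℝ → S1) '' Ioo a b) :=
    QuotientAddGroup.isOpenMap_coe _ isOpen_Ioo
  have key : (QuotientAddGroup.mk ⁻¹' (((↑) : ℝ → S1) '' Ioo a b)) ∩ Ioc a (a + 1) = Ioo a b := by
    ext x
    constructor
    · rintro ⟨⟨y, hy, hyx⟩, hx⟩
      obtain ⟨k, hk⟩ := coe_eq_coe_iff.mp hyx
      have hk0 : k = 0 := by
        have h1 : (k : ℝ) < 1 := by
          have := hy.1; have := hx.2; simp only [mem_Ioo, mem_Ioc] at *; linarith
        have h2 : (-1 : ℝ) < k := by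
          have := hy.2; have := hx.1; simp only [mem_Ioo, mem_Ioc] at *; linarith
        have : k < 1 := by exact_mod_cast h1
        have : (-1 : ℤ) < k := by exact_mod_cast h2
        omega
      rw [hk0] at hk
      simp only [Int.cast_zero, add_zero] at hk
      rwa [← hk]
    · intro hx
      exact ⟨⟨x, hx, rfl⟩, ⟨hx.1, le_trans hx.2.le hb⟩⟩
  rw [AddCircle.add_projection_respects_measure 1 a hopen.measurableSet]
  rw [key]
  exact Real.volume_Ioo

lemma norm_coe_le_abs (r : ℝ) : ‖((r : ℝ) : S1)‖ ≤ |r| := by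
  simpa using (QuotientAddGroup.norm_mk_le_norm (S := AddSubgroup.zmultiples (1:ℝ)) (m := r))

lemma dist_le_volume {S : Set S1} (hS : IsOpen S) (hconn : IsPreconnected S)
    {x y : S1} (hx : x ∈ S) (hy : y ∈ S) :
    ENNReal.ofReal (dist x y) ≤ volume S := by
  classical
  obtain ⟨xt, rfl⟩ : ∃ r : ℝ, ((r : ℝ) : S1) = x := QuotientAddGroup.mk_surjective x
  set P : Set ℝ := ((↑) : ℝ → S1) ⁻¹' S with hP
  have hPopen : IsOpen P := hS.preimage (AddCircle.continuous_mk' 1)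
  have hxP : xt ∈ P := hx
  set C : Set ℝ := connectedComponentIn P xt with hC
  have hCopen : IsOpen C := hPopen.connectedComponentIn
  have hxC : xt ∈ C := mem_connectedComponentIn hxP
  have hCP : C ⊆ P := connectedComponentIn_subset P xt
  set U : Set S1 := ((↑) : ℝ → S1) '' C with hU
  have key : ∀ z : ℝ, z ∈ P → ((z : ℝ) : S1) ∈ U →
      ((↑) : ℝ → S1) '' connectedComponentIn P z ⊆ U := by
    rintro z hzP ⟨c, hcC, hcz⟩
    obtain ⟨k, hk⟩ := coe_eq_coe_iff.mp hcz
    have htrans : (fun t : ℝ => t + (k:ℝ)) '' connectedComponentIn P z ⊆ C := by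
      have hsub : (fun t : ℝ => t + (k:ℝ)) '' connectedComponentIn P z ⊆ P := by
        rintro _ ⟨w, hw, rfl⟩
        have hwP : w ∈ P := connectedComponentIn_subset P z hw
        show (((w + (k:ℝ)) : ℝ) : S1) ∈ S
        rw [coe_add_int]; exact hwP
      have hpre : IsPreconnected ((fun t : ℝ => t + (k:ℝ)) '' connectedComponentIn P z) :=
        (isPreconnected_connectedComponentIn).image _ (continuous_add_right _).continuousOn
      have hcmem : c ∈ (fun t : ℝ => t + (k:ℝ)) '' connectedComponentIn P z :=
        ⟨z, mem_connectedComponentIn hzP, by rw [hk]⟩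
      have h2 := hpre.subset_connectedComponentIn hcmem hsub
      exact le_of_le_of_eq h2 (connectedComponentIn_eq hcC).symm
    rintro _ ⟨w, hw, rfl⟩
    exact ⟨w + k, htrans ⟨w, hw, rfl⟩, coe_add_int w k⟩
  have himg : S = U := by
    refine Subset.antisymm ?_ (by rintro _ ⟨c, hcC, rfl⟩; exact hCP hcC)
    intro s hsS
    by_contra hsU
    obtain ⟨z, hz⟩ : ∃ z : ℝ, ((z : ℝ) : S1) = s := QuotientAddGroup.mk_surjective s
    have hzP : z ∈ P := by rw [hP]; show ((z:ℝ):S1) ∈ S; rw [hz]; exact hsS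
    set V : Set S1 := ⋃ (w : ℝ) (_ : w ∈ P) (_ : ((w:ℝ) : S1) ∉ U),
      ((↑) : ℝ → S1) '' connectedComponentIn P w with hV
    have hUopen : IsOpen U := QuotientAddGroup.isOpenMap_coe _ hCopen
    have hVopen : IsOpen V :=
      isOpen_iUnion fun w => isOpen_iUnion fun _ => isOpen_iUnion fun _ =>
        QuotientAddGroup.isOpenMap_coe _ hPopen.connectedComponentIn
    have hdisj : ∀ t : S1, t ∈ U → t ∈ V → False := by
      intro t htU htV
      simp only [hV, mem_iUnion] at htV
      obtain ⟨w, hwP, hwU, v, hv, rfl⟩ := htV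
      have h1 : ((↑) : ℝ → S1) '' connectedComponentIn P v ⊆ U :=
        key v (connectedComponentIn_subset P w hv) htU
      have h2 : w ∈ connectedComponentIn P v := by
        rw [← connectedComponentIn_eq hv]
        exact mem_connectedComponentIn hwP
      exact hwU (h1 ⟨w, h2, rfl⟩)
    have hcover : S ⊆ U ∪ V := by
      intro t htS
      obtain ⟨tt, rfl⟩ : ∃ r : ℝ, ((r : ℝ) : S1) = t := QuotientAddGroup.mk_surjective t
      have httP : tt ∈ P := htS
      by_cases h : ((tt:ℝ) : S1) ∈ U
      · exact Or.inl h
      · refine Or.inr ?_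
        simp only [hV, mem_iUnion]
        exact ⟨tt, httP, h, tt, mem_connectedComponentIn httP, rfl⟩
    have hsV : s ∈ V := by
      simp only [hV, mem_iUnion]
      exact ⟨z, hzP, by rwa [hz], z, mem_connectedComponentIn hzP, hz⟩
    obtain ⟨t, htS, htU, htV⟩ := hconn U V hUopen hVopen hcover
      ⟨_, hx, ⟨xt, hxC, rfl⟩⟩ ⟨s, hsS, hsV⟩
    exact (hdisj t htU htV).elim
  -- now use the component to estimate
  obtain ⟨yt, hytC, hyty⟩ : ∃ r ∈ C, ((r : ℝ) : S1) = y := by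
    have : y ∈ U := himg ▸ hy
    exact this.imp fun r hr => ⟨hr.1, hr.2⟩
  have hCconn : IsPreconnected C := isPreconnected_connectedComponentIn
  have hord : OrdConnected C := hCconn.ordConnected
  set a := min xt yt
  set b := max xt yt
  have haC : a ∈ C := by rcases min_cases xt yt with ⟨h, _⟩ | ⟨h, _⟩ <;> simp [a, h, hxC, hytC]
  have hbC : b ∈ C := by rcases max_cases xt yt with ⟨h, _⟩ | ⟨h, _⟩ <;> simp [b, h, hxC, hytC]
  have hIcc : Icc a b ⊆ C := hord.out haC hbC
  have hdxy : dist ((xt : ℝ) : S1) y ≤ b - a := by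
    rw [← hyty, dist_eq_norm, ← AddCircle.coe_sub]
    refine (norm_coe_le_abs _).trans ?_
    rw [← max_sub_min_eq_abs, max_comm, min_comm]
  by_cases hba : b - a < 1
  · have hsub : ((↑) : ℝ → S1) '' Ioo a b ⊆ S := by
      rintro _ ⟨t, ht, rfl⟩
      exact hCP (hIcc (Ioo_subset_Icc_self ht))
    calc ENNReal.ofReal (dist ((xt : ℝ) : S1) y) ≤ ENNReal.ofReal (b - a) :=
          ENNReal.ofReal_le_ofReal hdxy
      _ = volume (((↑) : ℝ → S1) '' Ioo a b) := (volume_coe_Ioo (by linarith)).symm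
      _ ≤ volume S := measure_mono hsub
  · have huniv : S = univ := by
      have h1 : Icc a (a + 1) ⊆ C := fun t ht =>
        hIcc ⟨ht.1, ht.2.trans (by linarith)⟩
      have h2 : ((↑) : ℝ → S1) '' Icc a (a + 1) = univ := AddCircle.coe_image_Icc_eq 1 a
      apply eq_univ_of_univ_subset
      rw [← h2]
      rintro _ ⟨t, ht, rfl⟩
      exact hCP (h1 ht)
    rw [huniv, AddCircle.measure_univ]
    refine ENNReal.ofReal_le_ofReal ?_
    rw [dist_eq_norm]
    have := AddCircle.norm_le_half_period (p := 1) (x := ((xt:ℝ):S1) - y) one_ne_zero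
    simp only [abs_one] at this
    linarith

lemma iter_symm_cancel (f : S1 ≃ₜ S1) (j : ℕ) (x : S1) : (⇑f)^[j] ((⇑f.symm)^[j] x) = x :=
  (Function.LeftInverse.iterate f.apply_symm_apply j) x

/-- reduction: intersecting integer iterates give a forward return to I -/

lemma exists_return (f : S1 ≃ₜ S1) (I : Set S1) {k m : ℤ} (hkm : k < m)
    (hne : (zIter f k '' I ∩ zIter f m '' I).Nonempty) :
    ∃ n : ℕ, 1 ≤ n ∧ ∃ y ∈ I, (⇑f)^[n] y ∈ I := by
  obtain ⟨w, ⟨a, ha, hwa⟩, ⟨b, hb, hwb⟩⟩ := hne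
  by_cases h0k : 0 ≤ k
  · have h0m : 0 ≤ m := h0k.trans hkm.le
    rw [zIter, if_pos h0k] at hwa
    rw [zIter, if_pos h0m] at hwb
    have hlt : k.toNat < m.toNat := by omega
    set n := m.toNat - k.toNat with hn
    have : (⇑f)^[m.toNat] b = (⇑f)^[k.toNat] ((⇑f)^[n] b) := by
      rw [← Function.iterate_add_apply]
      congr 1; omega
    have heq : (⇑f)^[k.toNat] a = (⇑f)^[k.toNat] ((⇑f)^[n] b) := by rw [hwa, ← this, hwb]
    have hinj : Function.Injective ((⇑f)^[k.toNat]) := f.injective.iterate _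
    have := hinj heq
    exact ⟨n, by omega, b, hb, by rw [← this]; exact ha⟩
  · by_cases h0m : 0 ≤ m
    · rw [zIter, if_neg h0k] at hwa
      rw [zIter, if_pos h0m] at hwb
      have ha2 : a = (⇑f)^[(-k).toNat] w := by rw [← hwa, iter_symm_cancel]
      rw [← hwb, ← Function.iterate_add_apply] at ha2
      exact ⟨(-k).toNat + m.toNat, by omega, b, hb, by rw [← ha2]; exact ha⟩
    · rw [zIter, if_neg h0k] at hwa
      rw [zIter, if_neg h0m] at hwb
      have hlt : (-m).toNat < (-k).toNat := by omega
      set n := (-k).toNat - (-m).toNat with hn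
      have : (⇑f.symm)^[(-k).toNat] a = (⇑f.symm)^[(-m).toNat] ((⇑f.symm)^[n] a) := by
        rw [← Function.iterate_add_apply]
        congr 1; omega
      have heq : (⇑f.symm)^[(-m).toNat] ((⇑f.symm)^[n] a) = (⇑f.symm)^[(-m).toNat] b := by
        rw [← this, hwa, hwb]
      have hinj : Function.Injective ((⇑f.symm)^[(-m).toNat]) := f.symm.injective.iterate _
      have hb2 := hinj heq
      refine ⟨n, by omega, b, hb, ?_⟩
      rw [← hb2, iter_symm_cancel]
      exact ha

/-- Contraction Principle: if `f` is a circle homeomorphism with no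
periodic orbit and `I` is a nondegenerate subinterval with
`inf_{n ≥ 0} |f^n(I)| = 0` (arc length, i.e. Haar measure on the circle), then the
integer iterates `f^k(I)`, `k ∈ ℤ`, are pairwise disjoint, i.e. `I` is a wandering
interval. -/
theorem contraction_principle (f : S1 ≃ₜ S1) (hnp : NoPeriodicPoint f)
    (I : Set S1) (hI : IsNondegInterval I)
    (hinf : ⨅ n : ℕ, MeasureTheory.volume ((⇑f)^[n] '' I) = 0) :
    ∀ k m : ℤ, k ≠ m → Disjoint (zIter f k '' I) (zIter f m '' I) := by
  -- suffices: no forward return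
  have main : ∀ n : ℕ, 1 ≤ n → ∀ y ∈ I, (⇑f)^[n] y ∉ I := by
    intro n hn y hy hfy
    obtain ⟨u, v, huv, hv1, hIdef⟩ := hI
    -- properties of images
    have hIopen : IsOpen I := hIdef ▸ QuotientAddGroup.isOpenMap_coe _ isOpen_Ioo
    have hIconn : IsPreconnected I :=
      hIdef ▸ (isPreconnected_Ioo).image _ (AddCircle.continuous_mk' 1).continuousOn
    have homap : ∀ j : ℕ, IsOpenMap ((⇑f)^[j]) := by
      intro j
      induction j with
      | zero => simpa using IsOpenMap.id
      | succ j ih => rw [Function.iterate_succ]; exact ih.comp f.isOpenMap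
    have hcont : ∀ j : ℕ, Continuous ((⇑f)^[j]) := fun j => f.continuous.iterate j
    -- choose iterates with small volume
    have hsmall : ∀ i : ℕ, ∃ j : ℕ,
        volume ((⇑f)^[j] '' I) < ENNReal.ofReal (1 / (i + 1)) := by
      intro i
      have hpos : (0 : ℝ≥0∞) < ENNReal.ofReal (1 / (i + 1)) :=
        ENNReal.ofReal_pos.mpr (by positivity)
      rw [← hinf] at hpos
      exact iInf_lt_iff.mp hpos
    choose ms hms using hsmall
    -- distance estimate
    have hdist : ∀ i : ℕ, dist ((⇑f)^[ms i] y) ((⇑f)^[ms i] ((⇑f)^[n] y)) < 1 / (i + 1) := by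
      intro i
      have h1 : ENNReal.ofReal (dist ((⇑f)^[ms i] y) ((⇑f)^[ms i] ((⇑f)^[n] y)))
          ≤ volume ((⇑f)^[ms i] '' I) :=
        dist_le_volume ((homap (ms i)) I hIopen)
          (hIconn.image _ (hcont (ms i)).continuousOn)
          (mem_image_of_mem _ hy) (mem_image_of_mem _ hfy)
      have h2 := lt_of_le_of_lt h1 (hms i)
      exact (ENNReal.ofReal_lt_ofReal_iff (by positivity)).mp h2
    -- extract convergent subsequence
    obtain ⟨q, -, φ, hφ, hq⟩ := isCompact_univ.tendsto_subseq
      (x := fun i => (⇑f)^[ms i] y) (fun i => mem_univ _)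
    -- the companion sequence converges to the same point
    have hq2 : Filter.Tendsto (fun i => (⇑f)^[ms (φ i)] ((⇑f)^[n] y))
        Filter.atTop (nhds q) := by
      apply hq.congr_dist
      have hbound : ∀ i : ℕ,
          dist ((⇑f)^[ms (φ i)] y) ((⇑f)^[ms (φ i)] ((⇑f)^[n] y)) ≤ 1 / (i + 1) := by
        intro i
        refine (hdist (φ i)).le.trans ?_
        have h0 : i ≤ φ i := hφ.le_apply
        have : (i : ℝ) + 1 ≤ (φ i : ℝ) + 1 := by
          have := (Nat.cast_le (α := ℝ)).mpr h0; linarith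
        apply div_le_div_of_nonneg_left one_pos.le (by positivity) this
      refine squeeze_zero (fun i => dist_nonneg) hbound ?_
      exact tendsto_one_div_add_atTop_nhds_zero_nat
    -- continuity gives a fixed point
    have hcomm : ∀ i : ℕ, (⇑f)^[n] ((⇑f)^[ms (φ i)] y) = (⇑f)^[ms (φ i)] ((⇑f)^[n] y) := by
      intro i
      rw [← Function.iterate_add_apply, ← Function.iterate_add_apply, Nat.add_comm]
    have hq3 : Filter.Tendsto (fun i => (⇑f)^[n] ((⇑f)^[ms (φ i)] y))
        Filter.atTop (nhds ((⇑f)^[n] q)) := ((hcont n).tendsto q).comp hq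
    have hq4 : Filter.Tendsto (fun i => (⇑f)^[n] ((⇑f)^[ms (φ i)] y))
        Filter.atTop (nhds q) := by
      simpa only [hcomm] using hq2
    exact hnp q n hn (tendsto_nhds_unique hq3 hq4)
  -- conclude disjointness
  intro k m hkm
  rw [Set.disjoint_iff_inter_eq_empty]
  by_contra hne
  rw [← Ne, ← Set.nonempty_iff_ne_empty] at hne
  rcases lt_or_gt_of_ne hkm with h | h
  · obtain ⟨n, hn, y, hy, hfy⟩ := exists_return f I h hne
    exact main n hn y hy hfy
  · rw [Set.inter_comm] at hne
    obtain ⟨n, hn, y, hy, hfy⟩ := exists_return f I h hne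
    exact main n hn y hy hfy
end

section
/- If φ : I → ℝ satisfies the Zygmund condition with constant B, i.e. |φ(x+t) + φ(x−t) − 2φ(x)| ≤ B|t| whenever x−t, x, x+t ∈ I, then φ is α-Hölder continuous on I for every 0 < α < 1. -/
set_option maxHeartbeats 1000000 in
/-- if a continuous `φ` on `I = [a,b]` satisfies the Zygmund condition
with constant `B`, then `φ` is α-Hölder continuous on `I` for every `0 < α < 1`. -/
theorem zygmund_implies_holder (φ : ℝ → ℝ) (a b : ℝ) (hab : a < b)
    (hφ : ContinuousOn φ (Set.Icc a b)) (B : ℝ)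
    (hZ : ∀ x t : ℝ, x - t ∈ Set.Icc a b → x ∈ Set.Icc a b → x + t ∈ Set.Icc a b →
      |φ (x + t) + φ (x - t) - 2 * φ x| ≤ B * |t|) :
    ∀ α : ℝ, 0 < α → α < 1 → ∃ K > (0 : ℝ),
      ∀ x ∈ Set.Icc a b, ∀ y ∈ Set.Icc a b, |φ x - φ y| ≤ K * |x - y| ^ α := by
  set L : ℝ := b - a with hLdef
  clear_value L
  have hL : 0 < L := by simp only [hLdef]; linarith
  obtain ⟨M0, hM0⟩ := (isCompact_Icc (a := a) (b := b)).exists_bound_of_continuousOn hφ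
  set M : ℝ := max M0 0 with hMdef
  clear_value M
  have hM : 0 ≤ M := hMdef ▸ le_max_right _ _
  have hMb : ∀ z ∈ Set.Icc a b, |φ z| ≤ M := fun z hz =>
    le_trans (hM0 z hz) (hMdef ▸ le_max_left _ _)
  have hB : 0 ≤ B := by
    have hx : ((a+b)/2 : ℝ) ∈ Set.Icc a b := by
      simp only [Set.mem_Icc]; constructor <;> linarith
    have hxm : ((a+b)/2 : ℝ) - (b-a)/2 ∈ Set.Icc a b := by
      simp only [Set.mem_Icc]; constructor <;> linarith
    have hxp : ((a+b)/2 : ℝ) + (b-a)/2 ∈ Set.Icc a b := by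
      simp only [Set.mem_Icc]; constructor <;> linarith
    have h := hZ _ _ hxm hx hxp
    have ht : (0:ℝ) < |(b-a)/2| := by
      rw [abs_of_pos (by linarith)]; linarith
    nlinarith [abs_nonneg (φ ((a+b)/2 + (b-a)/2) + φ ((a+b)/2 - (b-a)/2) - 2 * φ ((a+b)/2))]
  -- one doubling step, for ordered pairs
  have step : ∀ x ∈ Set.Icc a b, ∀ y ∈ Set.Icc a b, x ≤ y → 3 * (y - x) ≤ L →
      ∃ u ∈ Set.Icc a b, ∃ v ∈ Set.Icc a b, v - u = 2 * (y - x) ∧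
        |φ x - φ y| ≤ |φ u - φ v| / 2 + B * (y - x) / 2 := by
    intro x hx y hy hxy h3
    obtain ⟨hx1, hx2⟩ := hx
    obtain ⟨hy1, hy2⟩ := hy
    set d : ℝ := y - x with hd
    have hd0 : 0 ≤ d := by linarith
    by_cases hcase : y + d ≤ b
    · -- Zygmund at center y, radius d
      have hyd : y + d ∈ Set.Icc a b := ⟨by linarith, hcase⟩
      have h := hZ y d (by simpa [hd] using (⟨hx1, hx2⟩ : x ∈ Set.Icc a b)) ⟨hy1, hy2⟩ hyd
      refine ⟨x, ⟨hx1, hx2⟩, y + d, hyd, by ring, ?_⟩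
      have hyx : y - d = x := by simp [hd]
      rw [hyx, abs_of_nonneg hd0] at h
      have := abs_sub_abs_le_abs_sub (φ x - φ y) ((φ x - φ (y+d)) / 2)
      calc |φ x - φ y| = |(φ x - φ (y + d)) / 2 + (φ (y+d) + φ x - 2 * φ y) / 2| := by
            ring_nf
          _ ≤ |(φ x - φ (y + d)) / 2| + |(φ (y+d) + φ x - 2 * φ y) / 2| := abs_add_le _ _
          _ ≤ |φ x - φ (y + d)| / 2 + B * d / 2 := by
            rw [abs_div, abs_div]
            simp only [abs_two]
            have h2 : |φ (y+d) + φ x - 2 * φ y| / 2 ≤ B * d / 2 :=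
              (div_le_div_iff_of_pos_right two_pos).mpr h
            exact add_le_add (le_refl _) h2
          _ = |φ x - φ (y + d)| / 2 + B * (y - x) / 2 := by rw [hd]
    · -- Zygmund at center x, radius d
      have hxd : x - d ∈ Set.Icc a b := by
        constructor
        · by_contra hcon
          push_neg at hcon
          have : b < y + d := lt_of_not_ge hcase
          simp only [hLdef] at h3
          linarith [hd ▸ this]
        · linarith
      have h := hZ x d hxd ⟨hx1, hx2⟩ (by rw [show x + d = y by simp [hd]]; exact ⟨hy1, hy2⟩)
      rw [show x + d = y by simp [hd], abs_of_nonneg hd0] at h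
      refine ⟨x - d, hxd, y, ⟨hy1, hy2⟩, by simp [hd]; ring, ?_⟩
      calc |φ x - φ y| = |(φ (x - d) - φ y) / 2 - (φ y + φ (x-d) - 2 * φ x) / 2| := by
            ring_nf
          _ ≤ |(φ (x - d) - φ y) / 2| + |(φ y + φ (x-d) - 2 * φ x) / 2| := abs_sub _ _
          _ ≤ |φ (x - d) - φ y| / 2 + B * (y - x) / 2 := by
            rw [abs_div, abs_div]
            simp only [abs_two]
            have h2 : |φ y + φ (x-d) - 2 * φ x| / 2 ≤ B * (y - x) / 2 := by
              rw [← hd]; exact (div_le_div_iff_of_pos_right two_pos).mpr h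
            exact add_le_add (le_refl _) h2
  have key : ∀ n : ℕ, ∀ x ∈ Set.Icc a b, ∀ y ∈ Set.Icc a b,
      3 * 2^n * |x - y| ≤ 2 * L →
      |φ x - φ y| ≤ 2 * M / 2^n + n * B * |x - y| / 2 := by
    intro n
    induction n with
    | zero =>
      intro x hx y hy _
      have h1 := hMb x hx
      have h2 := hMb y hy
      have h3 := abs_sub (φ x) (φ y)
      simp only [pow_zero, Nat.cast_zero]
      have h4 : 0 ≤ |x - y| := abs_nonneg _
      nlinarith
    | succ n ih =>
      have main : ∀ x ∈ Set.Icc a b, ∀ y ∈ Set.Icc a b, x ≤ y →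
          3 * 2^(n+1) * (y - x) ≤ 2 * L →
          |φ x - φ y| ≤ 2 * M / 2^(n+1) + (n+1) * B * (y - x) / 2 := by
        intro x hx y hy hxy hcond
        have h2n : (1:ℝ) ≤ 2^n := one_le_pow₀ one_le_two
        have hyx0 : 0 ≤ y - x := by linarith
        have hps : (2:ℝ)^(n+1) = 2^n * 2 := pow_succ 2 n
        have hcond' : 3 * (2^n * 2) * (y - x) ≤ 2 * L := by rw [← hps]; exact hcond
        have hprod : (y - x) ≤ 2^n * (y - x) :=
          le_mul_of_one_le_left hyx0 h2n
        have h3 : 3 * (y - x) ≤ L := by nlinarith [hprod, hcond']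
        obtain ⟨u, hu, v, hv, huv, hstep⟩ := step x hx y hy hxy h3
        have habs : |u - v| = 2 * (y - x) := by
          rw [abs_sub_comm, huv, abs_of_nonneg (by linarith)]
        have hcond2 : 3 * 2^n * |u - v| ≤ 2 * L := by
          rw [habs]
          nlinarith [hcond']
        have hih := ih u hu v hv hcond2
        rw [habs] at hih
        have hpow : (0:ℝ) < 2^n := by positivity
        have heq : 2 * M / 2^(n+1) = M / 2^n := by
          rw [hps]; field_simp
        rw [heq]
        have hih2 : |φ u - φ v| / 2 ≤ M / 2^n + (n:ℝ) * B * (y - x) / 2 := by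
          have heq2 : (2 * M / 2^n + (n:ℝ) * B * (2 * (y-x)) / 2) / 2
              = M / 2^n + (n:ℝ) * B * (y - x) / 2 := by
            field_simp
          calc |φ u - φ v| / 2 ≤ (2 * M / 2^n + (n:ℝ) * B * (2 * (y-x)) / 2) / 2 := by
                linarith [hih]
            _ = _ := heq2
        push_cast
        linarith [hih2, hstep]
      intro x hx y hy hcond
      rcases le_total x y with hxy | hxy
      · have habs : |x - y| = y - x := by
          rw [abs_sub_comm, abs_of_nonneg (by linarith)]
        rw [habs] at hcond ⊢
        push_cast
        exact main x hx y hy hxy hcond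
      · have habs : |x - y| = x - y := abs_of_nonneg (by linarith)
        rw [habs] at hcond ⊢
        rw [abs_sub_comm]
        push_cast
        exact main y hy x hx hxy hcond
  intro α hα hα1
  set β : ℝ := 1 - α with hβdef
  clear_value β
  have hβ : 0 < β := by simp only [hβdef]; linarith
  have hlog2 : (0:ℝ) < Real.log 2 := Real.log_pos one_lt_two
  set C : ℝ := (9 * M / L + B / (β * (2 * Real.log 2))) * L ^ β with hCdef
  clear_value C
  have hC : 0 ≤ C := by
    rw [hCdef]
    apply mul_nonneg
    · apply add_nonneg
      · exact div_nonneg (by linarith) hL.le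
      · exact div_nonneg hB (mul_nonneg hβ.le (by linarith))
    · exact Real.rpow_nonneg hL.le β
  refine ⟨C + 1, by linarith, ?_⟩
  intro x hx y hy
  set d : ℝ := |x - y| with hddef
  clear_value d
  have hd0 : 0 ≤ d := by rw [hddef]; exact abs_nonneg _
  have hdL : d ≤ L := by
    obtain ⟨hx1, hx2⟩ := hx
    obtain ⟨hy1, hy2⟩ := hy
    rw [hddef, abs_sub_le_iff]
    constructor <;> simp only [hLdef] <;> linarith
  rcases eq_or_lt_of_le hd0 with hd | hd
  · -- x = y
    have hxy : x = y := by
      have h0 : |x - y| = 0 := by rw [← hddef]; exact hd.symm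
      have h1 := abs_eq_zero.mp h0
      linarith [sub_eq_zero.mp h1]
    rw [hxy]
    simp only [sub_self, abs_zero]
    rw [← hd, Real.zero_rpow hα.ne', mul_zero]
  · -- d > 0
    have hdα : (0:ℝ) < d ^ α := Real.rpow_pos_of_pos hd α
    have hLβ : (0:ℝ) < L ^ β := Real.rpow_pos_of_pos hL β
    have hsplit : d = d ^ α * d ^ β := by
      rw [← Real.rpow_add hd]
      have hαβ : α + β = 1 := by rw [hβdef]; ring
      rw [hαβ, Real.rpow_one]
    have hdβL : d ^ β ≤ L ^ β := Real.rpow_le_rpow hd0 hdL hβ.le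
    have hdle : d ≤ L ^ β * d ^ α := by
      calc d = d ^ α * d ^ β := hsplit
        _ ≤ d ^ α * L ^ β :=
            mul_le_mul_of_nonneg_left hdβL hdα.le
        _ = L ^ β * d ^ α := mul_comm _ _
    have hmain : |φ x - φ y| ≤ C * d ^ α := by
      by_cases hbig : 2 * L < 3 * d
      · -- big case: trivial bound 2M
        have h1 := hMb x hx
        have h2 := hMb y hy
        have habs2 : |φ x - φ y| ≤ 2 * M := by
          calc |φ x - φ y| ≤ |φ x| + |φ y| := abs_sub _ _
            _ ≤ 2 * M := by linarith
        have hbound : |φ x - φ y| ≤ 3 * M / L * d := by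
          rw [div_mul_eq_mul_div, le_div_iff₀ hL]
          have e1 := mul_le_mul_of_nonneg_right habs2 hL.le
          have e2 := mul_nonneg hM (show (0:ℝ) ≤ 3*d - 2*L by linarith)
          nlinarith [e1, e2]
        have hML3 : (0:ℝ) ≤ 3 * M / L := div_nonneg (by linarith) hL.le
        have hLdα : (0:ℝ) ≤ L ^ β * d ^ α :=
          mul_nonneg (Real.rpow_nonneg hL.le β) (Real.rpow_nonneg hd0 α)
        have hcoef : 3 * M / L ≤ 9 * M / L + B / (β * (2 * Real.log 2)) := by
          have hBt : 0 ≤ B / (β * (2 * Real.log 2)) :=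
            div_nonneg hB (mul_nonneg hβ.le (by linarith))
          have h69 : 3 * M / L ≤ 9 * M / L :=
            (div_le_div_iff_of_pos_right hL).mpr (by linarith)
          linarith [h69, hBt]
        calc |φ x - φ y| ≤ 3 * M / L * d := hbound
          _ ≤ 3 * M / L * (L ^ β * d ^ α) :=
              mul_le_mul_of_nonneg_left hdle hML3
          _ ≤ (9 * M / L + B / (β * (2 * Real.log 2))) * (L ^ β * d ^ α) :=
              mul_le_mul_of_nonneg_right hcoef hLdα
          _ = C * d ^ α := by rw [hCdef]; ring
      · -- small case
        push_neg at hbig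
        set r : ℝ := 2 * L / (3 * d) with hrdef
        clear_value r
        have hr1 : 1 ≤ r := by
          rw [hrdef, le_div_iff₀ (by linarith)]
          linarith
        have hrpos : (0:ℝ) < r := by linarith
        set n : ℕ := ⌊Real.logb 2 r⌋₊ with hndef
        clear_value n
        have hlogb0 : 0 ≤ Real.logb 2 r := Real.logb_nonneg one_lt_two hr1
        have hn_le : (n:ℝ) ≤ Real.logb 2 r := by
          rw [hndef]; exact Nat.floor_le hlogb0
        have hn_lt : Real.logb 2 r < n + 1 := by
          rw [hndef]; exact Nat.lt_floor_add_one _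
        have h2n_le : (2:ℝ)^n ≤ r := by
          calc (2:ℝ)^n = (2:ℝ) ^ (n:ℝ) := (Real.rpow_natCast 2 n).symm
            _ ≤ (2:ℝ) ^ Real.logb 2 r :=
                Real.rpow_le_rpow_of_exponent_le one_le_two hn_le
            _ = r := Real.rpow_logb two_pos (by norm_num) hrpos
        have h2n_gt : r < (2:ℝ)^n * 2 := by
          calc r = (2:ℝ) ^ Real.logb 2 r := (Real.rpow_logb two_pos (by norm_num) hrpos).symm
            _ < (2:ℝ) ^ ((n:ℝ) + 1) :=
                Real.rpow_lt_rpow_of_exponent_lt one_lt_two hn_lt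
            _ = (2:ℝ)^n * 2 := by
                rw [Real.rpow_add two_pos, Real.rpow_natCast, Real.rpow_one]
        have hpow : (0:ℝ) < 2^n := by positivity
        rw [hrdef] at h2n_le h2n_gt
        have hcond : 3 * 2^n * |x - y| ≤ 2 * L := by
          rw [← hddef]
          have h := (le_div_iff₀ (by linarith : (0:ℝ) < 3 * d)).mp h2n_le
          linarith
        have hkey := key n x hx y hy hcond
        rw [← hddef] at hkey
        have hb1 : 2 * M / 2^n ≤ 6 * M * d / L := by
          rw [div_le_div_iff₀ hpow hL]
          have hgt : L < 3 * d * 2^n := by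
            have h := (div_lt_iff₀ (by linarith : (0:ℝ) < 3 * d)).mp h2n_gt
            linarith
          have e2 := mul_nonneg hM (show (0:ℝ) ≤ 3 * d * 2^n - L by linarith)
          linarith [e2]
        have hLd1 : (1:ℝ) ≤ L / d := (le_div_iff₀ hd).mpr (by linarith)
        have hLdpos : (0:ℝ) < L / d := div_pos hL hd
        have hlogLd : 0 ≤ Real.log (L / d) := Real.log_nonneg hLd1
        have hnb : (n:ℝ) ≤ Real.log (L / d) / Real.log 2 := by
          calc (n:ℝ) ≤ Real.logb 2 r := hn_le
            _ ≤ Real.logb 2 (L / d) := by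
                apply Real.logb_le_logb_of_le one_lt_two hrpos
                rw [hrdef, div_le_div_iff₀ (by linarith) hd]
                nlinarith [mul_nonneg hL.le hd0]
            _ = Real.log (L / d) / Real.log 2 := Real.log_div_log.symm
        -- bound d * log(L/d)
        have hdlog : d * Real.log (L / d) ≤ L ^ β * d ^ α / β := by
          have h1 : Real.log (L / d) ≤ (L / d) ^ β / β :=
            Real.log_le_rpow_div hLdpos.le hβ
          have h2 : (L / d) ^ β = L ^ β / d ^ β := Real.div_rpow hL.le hd0 β
          have h3 : d * ((L / d) ^ β / β) = L ^ β * d ^ α / β := by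
            have h4 : d ^ α = d / d ^ β := by
              rw [show α = 1 - β by rw [hβdef]; ring, Real.rpow_sub hd, Real.rpow_one]
            have hdβ : d ^ β ≠ 0 := (Real.rpow_pos_of_pos hd β).ne'
            rw [h2, h4]
            field_simp
          calc d * Real.log (L / d) ≤ d * ((L / d) ^ β / β) :=
                mul_le_mul_of_nonneg_left h1 hd0
            _ = L ^ β * d ^ α / β := h3
        -- combine
        have hF1 : 2 * M / 2^n ≤ 6 * M / L * (L ^ β * d ^ α) := by
          calc 2 * M / 2^n ≤ 6 * M * d / L := hb1
            _ = 6 * M / L * d := by ring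
            _ ≤ 6 * M / L * (L ^ β * d ^ α) :=
                mul_le_mul_of_nonneg_left hdle (div_nonneg (by linarith) hL.le)
        have hF2 : (n:ℝ) * B * d / 2 ≤ B / (β * (2 * Real.log 2)) * (L ^ β * d ^ α) := by
          calc (n:ℝ) * B * d / 2 ≤ (Real.log (L / d) / Real.log 2) * B * d / 2 := by
                have hBd : 0 ≤ B * d / 2 :=
                  div_nonneg (mul_nonneg hB hd0) (by norm_num)
                have := mul_nonneg (sub_nonneg.mpr hnb) hBd
                nlinarith [this]
            _ = (B / (2 * Real.log 2)) * (d * Real.log (L / d)) := by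
                ring
            _ ≤ (B / (2 * Real.log 2)) * (L ^ β * d ^ α / β) :=
                mul_le_mul_of_nonneg_left hdlog (div_nonneg hB (by linarith))
            _ = B / (β * (2 * Real.log 2)) * (L ^ β * d ^ α) := by
                ring
        have hF3 : 0 ≤ 3 * M / L * (L ^ β * d ^ α) :=
          mul_nonneg (div_nonneg (by linarith) hL.le)
            (mul_nonneg (Real.rpow_nonneg hL.le β) (Real.rpow_nonneg hd0 α))
        calc |φ x - φ y| ≤ 2 * M / 2^n + n * B * d / 2 := hkey
          _ ≤ (9 * M / L + B / (β * (2 * Real.log 2))) * (L ^ β * d ^ α) := by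
              have hexp : (9 * M / L + B / (β * (2 * Real.log 2))) * (L ^ β * d ^ α)
                  = 6 * M / L * (L ^ β * d ^ α)
                    + B / (β * (2 * Real.log 2)) * (L ^ β * d ^ α)
                    + 3 * M / L * (L ^ β * d ^ α) := by ring
              rw [hexp]
              linarith [hF1, hF2, hF3]
          _ = C * d ^ α := by rw [hCdef]; ring
    calc |φ x - φ y| ≤ C * d ^ α := hmain
      _ ≤ (C + 1) * d ^ α := by linarith [hdα.le]
end

section
/- If φ : I → ℝ satisfies the Zygmund condition (|φ(x+t) + φ(x−t) − 2φ(x)| ≤ B|t| for a fixed B and all admissible x, t), then φ has bounded Zygmund variation and bounded quadratic variation over the closed bounded interval I. -/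
open Finset

/-- The set of Zygmund-variation partition sums of `φ` over `[a,b]`. -/
def zygSums (φ : ℝ → ℝ) (a b : ℝ) : Set ℝ :=
  {s | ∃ (n : ℕ) (x : ℕ → ℝ), x 0 = a ∧ x n = b ∧ (∀ i < n, x i < x (i + 1)) ∧
    s = ∑ i ∈ Finset.range n, |φ (x i) + φ (x (i + 1)) - 2 * φ ((x i + x (i + 1)) / 2)|}

/-- The set of quadratic-variation partition sums of `g` over `[a,b]`. -/
def quadSums (g : ℝ → ℝ) (a b : ℝ) : Set ℝ :=
  {s | ∃ (n : ℕ) (x : ℕ → ℝ), x 0 = a ∧ x n = b ∧ (∀ i < n, x i < x (i + 1)) ∧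
    s = ∑ i ∈ Finset.range n, (g (x (i + 1)) - g (x i)) ^ 2}

lemma my_sq_le_two_pow (m : ℕ) : m ^ 2 ≤ 2 ^ (m + 1) := by
  induction m with
  | zero => norm_num
  | succ n ih =>
    have h := Nat.lt_two_pow_self (n := n)
    have h2 : 2 * n + 1 ≤ 2 ^ (n + 1) := by
      rw [pow_succ]; omega
    calc (n + 1) ^ 2 = n ^ 2 + (2 * n + 1) := by ring
      _ ≤ 2 ^ (n + 1) + 2 ^ (n + 1) := Nat.add_le_add ih h2
      _ = 2 ^ (n + 1 + 1) := by ring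

set_option maxHeartbeats 2000000 in
/-- if a continuous `φ` on the closed bounded interval `[a,b]` satisfies
the Zygmund condition, then `φ` has bounded Zygmund variation and bounded quadratic
variation over `[a,b]`. -/
theorem zygmund_implies_bounded_ZV_QV (φ : ℝ → ℝ) (a b : ℝ) (hab : a < b)
    (hφ : ContinuousOn φ (Set.Icc a b)) (B : ℝ)
    (hZ : ∀ x t : ℝ, x - t ∈ Set.Icc a b → x ∈ Set.Icc a b → x + t ∈ Set.Icc a b →
      |φ (x + t) + φ (x - t) - 2 * φ x| ≤ B * |t|) :
    BddAbove (zygSums φ a b) ∧ BddAbove (quadSums φ a b) := by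
  classical
  have hH0 : (0:ℝ) < b - a := by linarith
  have tri : ∀ u v : ℝ, |u - v| ≤ |u| + |v| := by
    intro u v
    rw [sub_eq_add_neg]
    exact (abs_add_le u (-v)).trans (by rw [abs_neg])
  -- B is nonnegative
  have hB : 0 ≤ B := by
    have hmem1 : (a+b)/2 - (b-a)/2 ∈ Set.Icc a b := Set.mem_Icc.mpr ⟨by linarith, by linarith⟩
    have hmem2 : (a+b)/2 ∈ Set.Icc a b := Set.mem_Icc.mpr ⟨by linarith, by linarith⟩
    have hmem3 : (a+b)/2 + (b-a)/2 ∈ Set.Icc a b := Set.mem_Icc.mpr ⟨by linarith, by linarith⟩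
    have h := hZ ((a+b)/2) ((b-a)/2) hmem1 hmem2 hmem3
    rw [abs_of_pos (by linarith : (0:ℝ) < (b-a)/2)] at h
    have h0 := abs_nonneg (φ ((a+b)/2 + (b-a)/2) + φ ((a+b)/2 - (b-a)/2) - 2 * φ ((a+b)/2))
    nlinarith
  -- bound on φ
  obtain ⟨M, hM⟩ := (isCompact_Icc).exists_bound_of_continuousOn hφ
  have hM0 : 0 ≤ M := le_trans (norm_nonneg _) (hM a (Set.mem_Icc.mpr ⟨le_refl a, le_of_lt hab⟩))
  simp only [Real.norm_eq_abs] at hM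
  -- key modulus of continuity estimate
  have key : ∀ k : ℕ, ∀ x y : ℝ, x ∈ Set.Icc a b → y ∈ Set.Icc a b → x ≤ y →
      2 ^ (k+1) * (y - x) ≤ b - a → 2 ^ k * |φ y - φ x| ≤ 2 * M + (k : ℝ) * B * (b - a) / 2 := by
    intro k
    induction k with
    | zero =>
      intro x y hx hy hxy hs
      have h1 := hM x hx
      have h2 := hM y hy
      have h3 := tri (φ y) (φ x)
      norm_num
      linarith
    | succ k ih =>
      intro x y hx hy hxy hs
      set s := y - x with hsdef
      clear_value s
      have hs0 : 0 ≤ s := by rw [hsdef]; linarith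
      have hpk : (0:ℝ) < 2 ^ k := pow_pos two_pos k
      have h34 : (4:ℝ) ≤ 2 ^ (k+1+1) := by
        calc (4:ℝ) = 2^2 := by norm_num
          _ ≤ 2^(k+1+1) := pow_le_pow_right₀ one_le_two (by omega)
      have hs3 : 3 * s ≤ b - a := by nlinarith
      have hks : 2 ^ k * s ≤ (b - a) / 4 := by
        have e : (2:ℝ)^(k+1+1) * s = 4 * (2^k * s) := by ring
        linarith
      have hBH : 0 ≤ B * (b - a) := mul_nonneg hB hH0.le
      by_cases hcase : y + s ≤ b
      · -- extend to the right
        have hz : y + s ∈ Set.Icc a b := Set.mem_Icc.mpr ⟨by linarith [hx.1], hcase⟩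
        have eys : y - s = x := by rw [hsdef]; ring
        have hzy := hZ y s (by rw [eys]; exact hx) hy hz
        rw [eys, abs_of_nonneg hs0] at hzy
        have hih := ih x (y + s) hx hz (by linarith)
          (by
            have e : (2:ℝ)^(k+1) * (y + s - x) = 2^(k+1+1) * s := by rw [hsdef]; ring
            linarith)
        have t1 : 2 * |φ y - φ x| ≤ |φ (y + s) - φ x| + B * s := by
          have e : 2 * (φ y - φ x) = (φ (y + s) - φ x) - (φ (y + s) + φ x - 2 * φ y) := by ring
          calc 2 * |φ y - φ x| = |2 * (φ y - φ x)| := by rw [abs_mul]; norm_num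
            _ = |(φ (y + s) - φ x) - (φ (y + s) + φ x - 2 * φ y)| := by rw [e]
            _ ≤ |φ (y + s) - φ x| + |φ (y + s) + φ x - 2 * φ y| := tri _ _
            _ ≤ |φ (y + s) - φ x| + B * s := by linarith
        have t2 : (2:ℝ)^k * (2 * |φ y - φ x|) ≤ 2^k * (|φ (y + s) - φ x| + B * s) :=
          mul_le_mul_of_nonneg_left t1 hpk.le
        have t4 : B * (2^k * s) ≤ B * ((b - a) / 4) := mul_le_mul_of_nonneg_left hks hB
        push_cast
        have e2 : (2:ℝ)^(k+1) * |φ y - φ x| = 2^k * (2 * |φ y - φ x|) := by ring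
        rw [e2]
        nlinarith [t2, t4, hih]
      · -- extend to the left
        push_neg at hcase
        have hxs : a ≤ x - s := by
          by_contra h
          push_neg at h
          linarith [hx.1, hy.2]
        have hz : x - s ∈ Set.Icc a b := Set.mem_Icc.mpr ⟨hxs, by linarith [hx.2]⟩
        have exs : x + s = y := by rw [hsdef]; ring
        have hzy := hZ x s hz hx (by rw [exs]; exact hy)
        rw [exs, abs_of_nonneg hs0] at hzy
        have hih := ih (x - s) y hz hy (by linarith)
          (by
            have e : (2:ℝ)^(k+1) * (y - (x - s)) = 2^(k+1+1) * s := by rw [hsdef]; ring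
            linarith)
        have t1 : 2 * |φ y - φ x| ≤ |φ y - φ (x - s)| + B * s := by
          have e : 2 * (φ y - φ x) = (φ y - φ (x - s)) + (φ y + φ (x - s) - 2 * φ x) := by ring
          calc 2 * |φ y - φ x| = |2 * (φ y - φ x)| := by rw [abs_mul]; norm_num
            _ = |(φ y - φ (x - s)) + (φ y + φ (x - s) - 2 * φ x)| := by rw [e]
            _ ≤ |φ y - φ (x - s)| + |φ y + φ (x - s) - 2 * φ x| := abs_add_le _ _
            _ ≤ |φ y - φ (x - s)| + B * s := by linarith
        have t2 : (2:ℝ)^k * (2 * |φ y - φ x|) ≤ 2^k * (|φ y - φ (x - s)| + B * s) :=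
          mul_le_mul_of_nonneg_left t1 hpk.le
        have t4 : B * (2^k * s) ≤ B * ((b - a) / 4) := mul_le_mul_of_nonneg_left hks hB
        push_cast
        have e2 : (2:ℝ)^(k+1) * |φ y - φ x| = 2^k * (2 * |φ y - φ x|) := by ring
        rw [e2]
        nlinarith [t2, t4, hih]
  -- quadratic increment bound
  set K := 8 * M^2 + B^2 * (b - a)^2 with hK
  have hK0 : 0 ≤ K := by rw [hK]; positivity
  clear_value K
  have quadC : ∀ x y : ℝ, x ∈ Set.Icc a b → y ∈ Set.Icc a b → x ≤ y →
      (φ y - φ x)^2 ≤ (4 * K / (b - a)) * (y - x) := by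
    intro x y hx hy hxy
    have hs0 : 0 ≤ y - x := by linarith
    rw [div_mul_eq_mul_div, le_div_iff₀ hH0]
    rcases le_or_gt (4 * (y - x)) (b - a) with hA | hA
    · rcases eq_or_lt_of_le hs0 with h0 | hspos
      · have hyx : y = x := by linarith
        rw [hyx]
        norm_num
      · have hex : ∃ n : ℕ, b - a < 2 ^ (n + 2) * (y - x) := by
          obtain ⟨n, hn⟩ := exists_nat_gt ((b - a) / (y - x))
          refine ⟨n, ?_⟩
          have h1 : (n:ℝ) ≤ 2^n := by exact_mod_cast (Nat.lt_two_pow_self (n := n)).le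
          have h2 : (2:ℝ)^n ≤ 2^(n+2) := pow_le_pow_right₀ one_le_two (by omega)
          rw [div_lt_iff₀ hspos] at hn
          nlinarith [mul_le_mul_of_nonneg_right (h1.trans h2) hs0]
        have hk1 : b - a < 2 ^ (Nat.find hex + 2) * (y - x) := Nat.find_spec hex
        have hkpos : Nat.find hex ≠ 0 := by
          intro h
          rw [h] at hk1
          norm_num at hk1
          linarith
        obtain ⟨j, hj⟩ := Nat.exists_eq_succ_of_ne_zero hkpos
        have hmin : ¬ (b - a < 2 ^ (j + 2) * (y - x)) := Nat.find_min hex (by omega)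
        push_neg at hmin
        rw [hj, Nat.succ_eq_add_one] at hk1
        have hkey := key (j+1) x y hx hy hxy
          (by
            have e : j + 1 + 1 = j + 2 := by omega
            rw [e]
            exact hmin)
        set P := (2:ℝ)^(j+1) with hP
        clear_value P
        have hPpos : (0:ℝ) < P := by rw [hP]; positivity
        have hP1 : (1:ℝ) ≤ P := by
          rw [hP]
          calc (1:ℝ) = 2^0 := by norm_num
            _ ≤ 2^(j+1) := pow_le_pow_right₀ one_le_two (by omega)
        have hm2 : ((j+1 : ℕ) : ℝ)^2 ≤ 2 * P := by
          have h2 : ((j+1)^2 : ℕ) ≤ (2^(j+1+1) : ℕ) := my_sq_le_two_pow (j+1)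
          calc ((j+1 : ℕ) : ℝ)^2 = (((j+1)^2 : ℕ) : ℝ) := by push_cast; ring
            _ ≤ ((2^(j+1+1) : ℕ) : ℝ) := by exact_mod_cast h2
            _ = 2 * P := by rw [hP]; push_cast; ring
        have hD := abs_nonneg (φ y - φ x)
        have hR0 : (0:ℝ) ≤ 2 * M + ((j+1 : ℕ) : ℝ) * B * (b - a) / 2 := by positivity
        have step2 : (P * |φ y - φ x|)^2 ≤ (2 * M + ((j+1 : ℕ) : ℝ) * B * (b - a) / 2)^2 :=
          pow_le_pow_left₀ (mul_nonneg hPpos.le hD) hkey 2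
        have step1 : (2 * M + ((j+1 : ℕ) : ℝ) * B * (b - a) / 2)^2 ≤ K * P := by
          rw [hK]
          nlinarith [hm2, sq_nonneg (2 * M - ((j+1 : ℕ) : ℝ) * B * (b - a) / 2),
            mul_le_mul_of_nonneg_right hm2 (sq_nonneg (B * (b - a))),
            sq_nonneg (B * (b - a)),
            mul_nonneg (sq_nonneg M) (by linarith : (0:ℝ) ≤ P - 1)]
        have step3 : |φ y - φ x|^2 * P ≤ K := by
          refine le_of_mul_le_mul_right ?_ hPpos
          calc |φ y - φ x|^2 * P * P = (P * |φ y - φ x|)^2 := by ring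
            _ ≤ K * P := step2.trans step1
        have hk1' : b - a < 4 * ((y - x) * P) := by
          have e : (2:ℝ)^(j+1+2) * (y - x) = 4 * ((y - x) * P) := by rw [hP]; ring
          linarith
        calc (φ y - φ x)^2 * (b - a) = |φ y - φ x|^2 * (b - a) := by rw [sq_abs]
          _ ≤ |φ y - φ x|^2 * (4 * ((y - x) * P)) :=
              mul_le_mul_of_nonneg_left hk1'.le (sq_nonneg _)
          _ = 4 * (y - x) * (|φ y - φ x|^2 * P) := by ring
          _ ≤ 4 * (y - x) * K := mul_le_mul_of_nonneg_left step3 (by linarith)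
          _ = 4 * K * (y - x) := by ring
    · have h1 := hM x hx
      have h2 := hM y hy
      have hDle : |φ y - φ x| ≤ 2 * M := by linarith [tri (φ y) (φ x)]
      have hD2 : (φ y - φ x)^2 ≤ 4 * M^2 := by
        nlinarith [abs_nonneg (φ y - φ x), sq_abs (φ y - φ x)]
      have h3 : (φ y - φ x)^2 * (b - a) ≤ 4 * M^2 * (b - a) :=
        mul_le_mul_of_nonneg_right hD2 hH0.le
      have h4 : 4 * M^2 * (b - a) ≤ 4 * M^2 * (4 * (y - x)) :=
        mul_le_mul_of_nonneg_left hA.le (by positivity)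
      have h5 : 0 ≤ B^2 * (b - a)^2 * (y - x) := mul_nonneg (by positivity) hs0
      have h6 : 0 ≤ M^2 * (y - x) := mul_nonneg (sq_nonneg M) hs0
      rw [hK]
      linarith
  -- partition points lie in [a,b]
  have bound : ∀ (n : ℕ) (x : ℕ → ℝ), x 0 = a → x n = b → (∀ i < n, x i < x (i + 1)) →
      ∀ i ≤ n, x i ∈ Set.Icc a b := by
    intro n x h0 hn hinc
    have mono : ∀ j, ∀ i ≤ j, j ≤ n → x i ≤ x j := by
      intro j
      induction j with
      | zero =>
        intro i hi _
        have : i = 0 := Nat.le_zero.mp hi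
        rw [this]
      | succ m ih =>
        intro i hi hjn
        rcases Nat.lt_or_ge i (m+1) with h | h
        · exact le_trans (ih i (by omega) (by omega)) (hinc m (by omega)).le
        · have : i = m + 1 := by omega
          rw [this]
    intro i hi
    constructor
    · rw [← h0]; exact mono i 0 (Nat.zero_le _) hi
    · rw [← hn]; exact mono n i hi le_rfl
  constructor
  · -- Zygmund variation bound
    refine ⟨B * (b - a) / 2, ?_⟩
    rintro s hs
    simp only [zygSums, Set.mem_setOf_eq] at hs
    obtain ⟨n, x, h0, hn, hinc, rfl⟩ := hs
    have hmem := bound n x h0 hn hinc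
    have hterm : ∀ i ∈ Finset.range n,
        |φ (x i) + φ (x (i+1)) - 2 * φ ((x i + x (i+1)) / 2)| ≤ B / 2 * (x (i+1) - x i) := by
      intro i hi
      rw [Finset.mem_range] at hi
      have hlt := hinc i hi
      have hxi := hmem i (by omega)
      have hxi1 := hmem (i+1) (by omega)
      have e1 : (x i + x (i+1))/2 + (x (i+1) - x i)/2 = x (i+1) := by ring
      have e2 : (x i + x (i+1))/2 - (x (i+1) - x i)/2 = x i := by ring
      have hc : (x i + x (i+1))/2 ∈ Set.Icc a b :=
        Set.mem_Icc.mpr ⟨by linarith [hxi.1, hxi1.1], by linarith [hxi.2, hxi1.2]⟩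
      have hz := hZ ((x i + x (i+1))/2) ((x (i+1) - x i)/2)
        (by rw [e2]; exact hxi) hc (by rw [e1]; exact hxi1)
      rw [e1, e2, abs_of_nonneg (by linarith : (0:ℝ) ≤ (x (i+1) - x i)/2)] at hz
      calc |φ (x i) + φ (x (i+1)) - 2 * φ ((x i + x (i+1)) / 2)|
          = |φ (x (i+1)) + φ (x i) - 2 * φ ((x i + x (i+1)) / 2)| := by
            rw [show φ (x i) + φ (x (i+1)) - 2 * φ ((x i + x (i+1)) / 2)
              = φ (x (i+1)) + φ (x i) - 2 * φ ((x i + x (i+1)) / 2) from by ring]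
        _ ≤ B * ((x (i+1) - x i) / 2) := hz
        _ = B / 2 * (x (i+1) - x i) := by ring
    calc ∑ i ∈ Finset.range n, |φ (x i) + φ (x (i + 1)) - 2 * φ ((x i + x (i + 1)) / 2)|
        ≤ ∑ i ∈ Finset.range n, B / 2 * (x (i+1) - x i) := Finset.sum_le_sum hterm
      _ = B / 2 * ∑ i ∈ Finset.range n, (x (i+1) - x i) := by rw [Finset.mul_sum]
      _ = B / 2 * (b - a) := by rw [Finset.sum_range_sub, h0, hn]
      _ = B * (b - a) / 2 := by ring
  · -- quadratic variation bound
    refine ⟨4 * K / (b - a) * (b - a), ?_⟩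
    rintro s hs
    simp only [quadSums, Set.mem_setOf_eq] at hs
    obtain ⟨n, x, h0, hn, hinc, rfl⟩ := hs
    have hmem := bound n x h0 hn hinc
    calc ∑ i ∈ Finset.range n, (φ (x (i + 1)) - φ (x i)) ^ 2
        ≤ ∑ i ∈ Finset.range n, 4 * K / (b - a) * (x (i+1) - x i) := by
          refine Finset.sum_le_sum ?_
          intro i hi
          rw [Finset.mem_range] at hi
          exact quadC (x i) (x (i+1)) (hmem i (by omega)) (hmem (i+1) (by omega)) (hinc i hi).le
      _ = 4 * K / (b - a) * ∑ i ∈ Finset.range n, (x (i+1) - x i) := by rw [Finset.mul_sum]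
      _ = 4 * K / (b - a) * (b - a) := by rw [Finset.sum_range_sub, h0, hn]
end

section
/- If φ satisfies the Zygmund condition with constant B, then for all x, t and all n ∈ ℕ, |φ(x + t/2^n) − φ(x)|/(|t|/2^n) ≤ |φ(x+t) − φ(x)|/|t| + nB. -/
lemma zygmund_half_step (φ : ℝ → ℝ) (B : ℝ)
    (hZ : ∀ x s : ℝ, |φ (x + s) + φ (x - s) - 2 * φ x| ≤ B * |s|)
    (hB : 0 ≤ B) (x u : ℝ) (hu : u ≠ 0) :
    |φ (x + u / 2) - φ x| / (|u| / 2) ≤ |φ (x + u) - φ x| / |u| + B := by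
  have hu' : (0 : ℝ) < |u| := abs_pos.mpr hu
  have h := hZ (x + u / 2) (u / 2)
  have e1 : x + u / 2 + u / 2 = x + u := by ring
  have e2 : x + u / 2 - u / 2 = x := by ring
  rw [e1, e2] at h
  have habs : |u / 2| = |u| / 2 := by
    rw [abs_div]; norm_num
  rw [habs] at h
  have h2 : 2 * |φ (x + u / 2) - φ x| ≤ |φ (x + u) - φ x| + B * (|u| / 2) := by
    have hd : (φ (x + u) - φ x) - (φ (x + u) + φ x - 2 * φ (x + u / 2))
        = 2 * (φ (x + u / 2) - φ x) := by ring
    calc 2 * |φ (x + u / 2) - φ x| = |2 * (φ (x + u / 2) - φ x)| := by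
          rw [abs_mul]; norm_num
      _ = |(φ (x + u) - φ x) - (φ (x + u) + φ x - 2 * φ (x + u / 2))| := by rw [hd]
      _ ≤ |φ (x + u) - φ x| + |φ (x + u) + φ x - 2 * φ (x + u / 2)| :=
          abs_sub _ _
      _ ≤ |φ (x + u) - φ x| + B * (|u| / 2) := by linarith
  have e3 : |φ (x + u / 2) - φ x| / (|u| / 2) = (2 * |φ (x + u / 2) - φ x|) / |u| := by
    field_simp
  rw [e3]
  calc (2 * |φ (x + u / 2) - φ x|) / |u|
      ≤ (|φ (x + u) - φ x| + B * (|u| / 2)) / |u| := by gcongr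
    _ = |φ (x + u) - φ x| / |u| + B / 2 := by
        rw [add_div, mul_div_assoc]
        congr 1
        rw [div_right_comm, div_self hu'.ne', one_div, ← div_eq_mul_inv]
    _ ≤ |φ (x + u) - φ x| / |u| + B := by linarith

/-- if `φ : ℝ → ℝ` satisfies the Zygmund condition with constant `B`,
then for all `x`, `t ≠ 0` and `n ∈ ℕ`,
`|φ(x + t/2^n) − φ(x)|/(|t|/2^n) ≤ |φ(x+t) − φ(x)|/|t| + nB`. -/
theorem zygmund_dyadic_difference_bound (φ : ℝ → ℝ) (B : ℝ)
    (hZ : ∀ x s : ℝ, |φ (x + s) + φ (x - s) - 2 * φ x| ≤ B * |s|) :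
    ∀ (x t : ℝ) (n : ℕ), t ≠ 0 →
      |φ (x + t / 2 ^ n) - φ x| / (|t| / 2 ^ n) ≤
        |φ (x + t) - φ x| / |t| + n * B := by
  have hB : 0 ≤ B := by
    have h := hZ 0 1
    have h0 : (0:ℝ) ≤ |φ (0 + 1) + φ (0 - 1) - 2 * φ 0| := abs_nonneg _
    simpa using le_trans h0 h
  intro x t n ht
  induction n with
  | zero => simp
  | succ n ih =>
    set u := t / 2 ^ n with hu_def
    have hu : u ≠ 0 := div_ne_zero ht (by positivity)
    have e1 : t / 2 ^ (n + 1) = u / 2 := by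
      rw [hu_def, pow_succ, div_div]
    have e2 : |t| / 2 ^ (n + 1) = |u| / 2 := by
      rw [hu_def, abs_div, abs_pow, pow_succ, div_div]
      norm_num
    rw [e1, e2]
    have key := zygmund_half_step φ B hZ hB x u hu
    have hu_abs : |u| = |t| / 2 ^ n := by
      rw [hu_def, abs_div, abs_pow]; norm_num
    rw [← hu_abs] at ih
    push_cast
    linarith
end

section
/- Let f : S¹ → S¹ be a homeomorphism with no periodic point, and suppose there exist a nondegenerate interval J ⊂ S¹, an integer a ≥ 1, and a sequence of pairwise disjoint nondegenerate intervals J_i ⊂ J, i ∈ ℕ, with f^a(J_i) = J_{i+1} and the J_i ordered monotonically in J. Then f^a has a fixed point in the closure of J, a contradiction; hence no such configuration exists. -/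
open Filter Topology Set

section Interleaved

variable {α : Type*} [ConditionallyCompleteLinearOrder α] [TopologicalSpace α] [OrderTopology α]
  {p q : ℕ → α}

theorem exists_tendsto_of_le_of_le_succ (hpq : ∀ i, p i ≤ q i) (hqp : ∀ i, q i ≤ p (i + 1))
    (hq : BddAbove (range q)) : ∃ L, Tendsto p atTop (𝓝 L) ∧ Tendsto q atTop (𝓝 L) := by
  have hmono : Monotone p := monotone_nat_of_le_succ fun i => (hpq i).trans (hqp i)
  obtain ⟨b, hb⟩ := hq
  have hp : Tendsto p atTop (𝓝 (⨆ i, p i)) :=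
    tendsto_atTop_ciSup hmono ⟨b, forall_mem_range.2 fun i => (hpq i).trans (hb ⟨i, rfl⟩)⟩
  exact ⟨_, hp, tendsto_of_tendsto_of_tendsto_of_le_of_le hp
    (hp.comp (tendsto_add_atTop_nat 1)) hpq hqp⟩

theorem exists_tendsto_of_le_of_succ_le (hpq : ∀ i, p i ≤ q i) (hqp : ∀ i, q (i + 1) ≤ p i)
    (hp : BddBelow (range p)) : ∃ L, Tendsto p atTop (𝓝 L) ∧ Tendsto q atTop (𝓝 L) :=
  (exists_tendsto_of_le_of_le_succ (α := αᵒᵈ) (p := q) (q := p) hpq hqp hp).imp fun _ => And.symm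

end Interleaved

theorem Function.isFixedPt_of_tendsto_of_map_eq {X : Type*} [TopologicalSpace X] [T2Space X]
    {g : X → X} (hg : Continuous g) {x y : ℕ → X} {L : X}
    (hx : Tendsto x atTop (𝓝 L)) (hy : Tendsto y atTop (𝓝 L)) (hxy : ∀ i, g (x i) = y i) :
    Function.IsFixedPt g L :=
  tendsto_nhds_unique ((hg.tendsto L).comp hx) (by simpa only [Function.comp_def, hxy] using hy)

theorem no_translated_interval_sequence_general (f : S1 ≃ₜ S1) (hnp : NoPeriodicPoint f)
    (u v : ℝ) (a : ℕ) (ha : 1 ≤ a)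
    (p q : ℕ → ℝ)
    (hsub : ∀ i, u ≤ p i ∧ p i < q i ∧ q i ≤ v)
    (hmono : (∀ i, q i < p (i + 1)) ∨ (∀ i, q (i + 1) < p i))
    (hmap : ∀ i, (⇑f)^[a] '' ((fun t : ℝ => ((t : ℝ) : S1)) '' Set.Ioo (p i) (q i)) =
      (fun t : ℝ => ((t : ℝ) : S1)) '' Set.Ioo (p (i + 1)) (q (i + 1))) :
    False := by
  have hpq : ∀ i, p i ≤ q i := fun i => (hsub i).2.1.le
  obtain ⟨L, hpL, hqL⟩ : ∃ L, Tendsto p atTop (𝓝 L) ∧ Tendsto q atTop (𝓝 L) := by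
    rcases hmono with hmono | hmono
    · exact exists_tendsto_of_le_of_le_succ hpq (fun i => (hmono i).le)
        ⟨v, forall_mem_range.2 fun i => (hsub i).2.2⟩
    · exact exists_tendsto_of_le_of_succ_le hpq (fun i => (hmono i).le)
        ⟨u, forall_mem_range.2 fun i => (hsub i).1⟩
  choose x hx using fun i => exists_between (hsub i).2.1
  have himage : ∀ i, ∃ y ∈ Ioo (p (i + 1)) (q (i + 1)), ((y : ℝ) : S1) = (⇑f)^[a] (x i) := by
    intro i
    rw [← mem_image, ← hmap i]
    exact mem_image_of_mem _ (mem_image_of_mem _ (hx i))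
  choose y hy hxy using himage
  have hxL : Tendsto x atTop (𝓝 L) := tendsto_of_tendsto_of_tendsto_of_le_of_le hpL hqL
    (fun i => (hx i).1.le) (fun i => (hx i).2.le)
  have hyL : Tendsto y atTop (𝓝 L) := tendsto_of_tendsto_of_tendsto_of_le_of_le
    (hpL.comp (tendsto_add_atTop_nat 1)) (hqL.comp (tendsto_add_atTop_nat 1))
    (fun i => (hy i).1.le) (fun i => (hy i).2.le)
  have hcoe : Continuous ((↑) : ℝ → S1) := AddCircle.continuous_mk' 1
  exact hnp _ a ha <| Function.isFixedPt_of_tendsto_of_map_eq (f.continuous.iterate a)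
    ((hcoe.tendsto L).comp hxL) ((hcoe.tendsto L).comp hyL) fun i => (hxy i).symm

/-- for a circle homeomorphism `f` with no periodic point there is no
nondegenerate interval `J` (here the projection of `[u,v]` with `u < v < u + 1`),
integer `a ≥ 1`, and monotonically ordered sequence of pairwise disjoint nondegenerate
subintervals `J_i ⊆ J` with `f^a(J_i) = J_{i+1}`: such a configuration would force a
fixed point of `f^a` in the closure of `J`. -/
theorem no_translated_interval_sequence (f : S1 ≃ₜ S1) (hnp : NoPeriodicPoint f)
    (u v : ℝ) (huv : u < v) (hv1 : v < u + 1) (a : ℕ) (ha : 1 ≤ a)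
    (p q : ℕ → ℝ)
    (hsub : ∀ i, u ≤ p i ∧ p i < q i ∧ q i ≤ v)
    (hmono : (∀ i, q i < p (i + 1)) ∨ (∀ i, q (i + 1) < p i))
    (hdisj : ∀ i j, i ≠ j →
      Disjoint ((fun t : ℝ => ((t : ℝ) : S1)) '' Set.Ioo (p i) (q i))
        ((fun t : ℝ => ((t : ℝ) : S1)) '' Set.Ioo (p j) (q j)))
    (hmap : ∀ i, (⇑f)^[a] '' ((fun t : ℝ => ((t : ℝ) : S1)) '' Set.Ioo (p i) (q i)) =
      (fun t : ℝ => ((t : ℝ) : S1)) '' Set.Ioo (p (i + 1)) (q (i + 1))) :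
    False :=
  no_translated_interval_sequence_general f hnp u v a ha p q hsub hmono hmap
end
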